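/- arXiv:2111.09379 — 4 statements merged into one kernel-verified Lean document; each statement's English description precedes it below -/
import Mathlib

section
/- Let μ be a Radon probability measure on ℝ^d with lower dimension underline{dim}(μ) > d−1. Then for every δ > (overline{dim}(μ) − (d−1)) / (underline{dim}(μ) − (d−1)) and every η ∈ (0,1], one has μ(E_μ(δ,η)) = 0. -/
open MeasureTheory Metric Set Filter

/-- The annulus `A(x,r,δ) = B(x,r) \ B(x, r - r^δ)`. -/
noncomputable def annulus {E : Type*} [NormedAddCommGroup E] (x : E) (r δ : ℝ) : Set E :=
  closedBall x r \ closedBall x (r - r ^ δ)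

/-- `E_μ(δ,η)`: points around which the measure concentrates on thin annuli
infinitely often, i.e. along a sequence of radii tending to `0`. -/
def Eset {E : Type*} [NormedAddCommGroup E] [MeasurableSpace E]
    (μ : Measure E) (δ η : ℝ) : Set E :=
  {x | ∃ r : ℕ → ℝ, (∀ n, 0 < r n ∧ r n < 1) ∧ Tendsto r atTop (nhds 0) ∧
      ∀ n, ENNReal.ofReal η * μ (closedBall x (r n)) ≤ μ (annulus x (r n) δ)}

/-- Lower dimension of a measure. -/
noncomputable def lowerDim {E : Type*} [NormedAddCommGroup E] [MeasurableSpace E]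
    (μ : Measure E) : ℝ :=
  sSup {α : ℝ | 0 ≤ α ∧ ∀ᵐ x ∂μ, ∃ rx > (0 : ℝ), ∀ r : ℝ, 0 < r → r < rx →
    μ (closedBall x r) ≤ ENNReal.ofReal (r ^ α)}

/-- Upper dimension of a measure. -/
noncomputable def upperDim {E : Type*} [NormedAddCommGroup E] [MeasurableSpace E]
    (μ : Measure E) : ℝ :=
  sInf {β : ℝ | 0 ≤ β ∧ ∀ᵐ x ∂μ, ∃ rx > (0 : ℝ), ∀ r : ℝ, 0 < r → r < rx →
    ENNReal.ofReal (r ^ β) ≤ μ (closedBall x r)}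

open scoped ENNReal NNReal Topology
set_option linter.unusedSectionVars false
set_option linter.unusedVariables false

section aux
variable {E : Type*} [NormedAddCommGroup E] [NormedSpace ℝ E]
    [FiniteDimensional ℝ E] [MeasurableSpace E] [BorelSpace E]

-- a^d - b^d ≤ d * a^(d-1) * (a-b)
lemma pow_sub_pow_le' {a b : ℝ} (hb : 0 ≤ b) (hba : b ≤ a) :
    ∀ d : ℕ, a ^ d - b ^ d ≤ d * a ^ (d - 1) * (a - b) := by
  intro d
  induction d with
  | zero => simp
  | succ n ih =>
    have ha : 0 ≤ a := hb.trans hba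
    have key : a ^ (n+1) - b ^ (n+1) = a * (a ^ n - b ^ n) + b ^ n * (a - b) := by ring
    rw [key]
    have h1 : a * (a ^ n - b ^ n) ≤ n * a ^ n * (a - b) := by
      calc a * (a ^ n - b ^ n) ≤ a * (n * a ^ (n-1) * (a-b)) := by
            apply mul_le_mul_of_nonneg_left ih ha
        _ ≤ n * a ^ n * (a - b) := by
            rcases Nat.eq_zero_or_pos n with h | h
            · subst h; simp
            · have : a * (↑n * a ^ (n - 1) * (a - b)) = ↑n * (a * a ^ (n-1)) * (a - b) := by ring
              rw [this, ← pow_succ', Nat.sub_add_cancel h]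
    have h2 : b ^ n * (a - b) ≤ a ^ n * (a - b) := by
      apply mul_le_mul_of_nonneg_right (pow_le_pow_left₀ hb hba n) (by linarith)
    have : (↑(n+1) : ℝ) * a ^ ((n+1) - 1) * (a - b) = ↑n * a ^ n * (a-b) + a ^ n * (a-b) := by
      push_cast [Nat.add_sub_cancel]; ring
    linarith [h1, h2, this.ge]
end aux

section aux2
variable {E : Type*} [NormedAddCommGroup E] [NormedSpace ℝ E]
    [FiniteDimensional ℝ E] [MeasurableSpace E] [BorelSpace E]

lemma pack_le (ν : Measure E) [ν.IsAddHaarMeasure] {w : ℝ} (hw : 0 < w) (Y : Finset E)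
    (hsep : ∀ y ∈ Y, ∀ z ∈ Y, y ≠ z → w ≤ dist y z) {V : Set E}
    (hV : ∀ y ∈ Y, closedBall y (w/3) ⊆ V) :
    (Y.card : ℝ≥0∞) * ν (closedBall (0:E) (w/3)) ≤ ν V := by
  classical
  have hdisj : (↑Y : Set E).PairwiseDisjoint (fun y => closedBall y (w/3)) := by
    intro y hy z hz hyz
    apply closedBall_disjoint_closedBall
    have := hsep y hy z hz hyz
    linarith
  have hmeas : ∀ y ∈ Y, MeasurableSet (closedBall y (w/3)) := fun y _ => measurableSet_closedBall
  have h1 : ν (⋃ y ∈ Y, closedBall y (w/3)) = ∑ y ∈ Y, ν (closedBall y (w/3)) :=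
    measure_biUnion_finset hdisj hmeas
  have h2 : ∀ y ∈ Y, ν (closedBall y (w/3)) = ν (closedBall (0:E) (w/3)) := fun y _ =>
    Measure.addHaar_closedBall_center ν y _
  calc (Y.card : ℝ≥0∞) * ν (closedBall (0:E) (w/3))
      = ∑ y ∈ Y, ν (closedBall y (w/3)) := by
        rw [Finset.sum_congr rfl h2, Finset.sum_const, nsmul_eq_mul]
    _ = ν (⋃ y ∈ Y, closedBall y (w/3)) := h1.symm
    _ ≤ ν V := measure_mono (iUnion₂_subset hV)

lemma exists_maximal_separated {A : Set E} {w : ℝ} (hw : 0 < w) (N : ℕ)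
    (hN : ∀ Y : Finset E, ↑Y ⊆ A → (∀ y ∈ Y, ∀ z ∈ Y, y ≠ z → w ≤ dist y z) → Y.card ≤ N) :
    ∃ Y : Finset E, ↑Y ⊆ A ∧ (∀ y ∈ Y, ∀ z ∈ Y, y ≠ z → w ≤ dist y z) ∧
      A ⊆ ⋃ y ∈ Y, closedBall y w := by
  classical
  set P : ℕ → Prop := fun n => ∃ Y : Finset E, ↑Y ⊆ A ∧
    (∀ y ∈ Y, ∀ z ∈ Y, y ≠ z → w ≤ dist y z) ∧ Y.card = n with hPdef
  have hP0 : P 0 := ⟨∅, by simp, by simp, rfl⟩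
  obtain ⟨Y, hYA, hYsep, hYcard⟩ := Nat.findGreatest_spec (Nat.zero_le N) hP0
  refine ⟨Y, hYA, hYsep, ?_⟩
  intro a ha
  by_contra hcov
  simp only [mem_iUnion, mem_closedBall, not_exists] at hcov
  have hfar : ∀ y ∈ Y, w ≤ dist a y := by
    intro y hy
    have := hcov y hy
    push_neg at this
    exact this.le
  have haY : a ∉ Y := by
    intro h
    have := hcov a h
    simp [dist_self] at this
    linarith
  have hP1 : P (Y.card + 1) := by
    refine ⟨insert a Y, ?_, ?_, ?_⟩
    · intro z hz
      simp only [Finset.coe_insert, Set.mem_insert_iff] at hz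
      rcases hz with rfl | hz
      · exact ha
      · exact hYA hz
    · intro y hy z hz hyz
      simp only [Finset.mem_insert] at hy hz
      rcases hy with rfl | hy
      · rcases hz with rfl | hz
        · exact absurd rfl hyz
        · exact hfar z hz
      · rcases hz with rfl | hz
        · rw [dist_comm]; exact hfar y hy
        · exact hYsep y hy z hz hyz
    · rw [Finset.card_insert_of_notMem haY]
  have hle : Y.card + 1 ≤ N := by
    obtain ⟨Z, hZA, hZsep, hZcard⟩ := hP1
    rw [← hZcard]
    exact hN Z hZA hZsep
  have := Nat.le_findGreatest hle hP1
  omega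
end aux2

section aux3
variable {E : Type*} [NormedAddCommGroup E] [NormedSpace ℝ E]
    [FiniteDimensional ℝ E] [MeasurableSpace E] [BorelSpace E]

lemma cover_measure_le (ν : Measure E) [ν.IsAddHaarMeasure] (μ : Measure E)
    {A V : Set E} {w Q cc : ℝ} (hw : 0 < w) (hQ : 0 ≤ Q) (hcc : 0 ≤ cc)
    (hsub : ∀ y ∈ A, closedBall y (w/3) ⊆ V)
    (hν : ν V ≤ ENNReal.ofReal Q * ν (closedBall (0:E) 1))
    (hball : ∀ y ∈ A, μ (closedBall y w) ≤ ENNReal.ofReal cc) :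
    μ A ≤ ENNReal.ofReal (Q * (3/w) ^ (Module.finrank ℝ E) * cc) := by
  classical
  set dd := Module.finrank ℝ E with hdd
  have hw3 : 0 < w / 3 := by linarith
  have hB : ν (closedBall (0:E) (w/3))
      = ENNReal.ofReal ((w/3) ^ dd) * ν (closedBall (0:E) 1) :=
    Measure.addHaar_closedBall' ν 0 hw3.le
  have hV1top : ν (closedBall (0:E) 1) ≠ ⊤ := measure_closedBall_lt_top.ne
  have hV10 : ν (closedBall (0:E) 1) ≠ 0 := (measure_closedBall_pos ν 0 one_pos).ne'
  have hwd0 : ENNReal.ofReal ((w/3) ^ dd) ≠ 0 := by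
    simp only [ne_eq, ENNReal.ofReal_eq_zero, not_le]
    positivity
  have hwdtop : ENNReal.ofReal ((w/3) ^ dd) ≠ ⊤ := ENNReal.ofReal_ne_top
  have hprod : ENNReal.ofReal (Q * (3/w) ^ dd) * ENNReal.ofReal ((w/3) ^ dd)
      = ENNReal.ofReal Q := by
    rw [← ENNReal.ofReal_mul (by positivity)]
    congr 1
    rw [mul_assoc, ← mul_pow]
    have : 3 / w * (w / 3) = 1 := by field_simp
    rw [this, one_pow, mul_one]
  have key : ∀ Y : Finset E, ↑Y ⊆ A → (∀ y ∈ Y, ∀ z ∈ Y, y ≠ z → w ≤ dist y z) →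
      (Y.card : ℝ≥0∞) ≤ ENNReal.ofReal (Q * (3/w) ^ dd) := by
    intro Y hYA hsep
    have h1 := pack_le ν hw Y hsep (V := V) (fun y hy => hsub y (hYA hy))
    rw [hB] at h1
    have h2 : ((Y.card : ℝ≥0∞) * ENNReal.ofReal ((w/3) ^ dd)) * ν (closedBall (0:E) 1)
        ≤ ENNReal.ofReal Q * ν (closedBall (0:E) 1) := by
      rw [mul_assoc]; exact h1.trans hν
    have h3 : (Y.card : ℝ≥0∞) * ENNReal.ofReal ((w/3) ^ dd) ≤ ENNReal.ofReal Q :=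
      (ENNReal.mul_le_mul_iff_left hV10 hV1top).mp h2
    rw [← hprod] at h3
    exact (ENNReal.mul_le_mul_iff_left hwd0 hwdtop).mp h3
  set N : ℕ := Nat.ceil (Q * (3/w) ^ dd) with hNdef
  have hcard : ∀ Y : Finset E, ↑Y ⊆ A → (∀ y ∈ Y, ∀ z ∈ Y, y ≠ z → w ≤ dist y z) →
      Y.card ≤ N := by
    intro Y hYA hsep
    have := key Y hYA hsep
    rcases Nat.eq_zero_or_pos Y.card with h | h
    · omega
    · have h2 : (Y.card : ℝ) ≤ Q * (3/w) ^ dd :=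
        (ENNReal.natCast_le_ofReal (by omega)).mp this
      exact_mod_cast h2.trans (Nat.le_ceil _)
  obtain ⟨Y, hYA, hYsep, hcov⟩ := exists_maximal_separated hw N hcard
  calc μ A ≤ μ (⋃ y ∈ Y, closedBall y w) := measure_mono hcov
    _ ≤ ∑ y ∈ Y, μ (closedBall y w) := measure_biUnion_finset_le Y _
    _ ≤ ∑ y ∈ Y, ENNReal.ofReal cc := Finset.sum_le_sum (fun y hy => hball y (hYA hy))
    _ = (Y.card : ℝ≥0∞) * ENNReal.ofReal cc := by rw [Finset.sum_const, nsmul_eq_mul]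
    _ ≤ ENNReal.ofReal (Q * (3/w) ^ dd) * ENNReal.ofReal cc :=
        mul_le_mul' (key Y hYA hYsep) le_rfl
    _ = ENNReal.ofReal (Q * (3/w) ^ dd * cc) := by
        rw [← ENNReal.ofReal_mul (by positivity)]
end aux3

section aux4
variable {E : Type*} [NormedAddCommGroup E] [NormedSpace ℝ E]
    [FiniteDimensional ℝ E] [MeasurableSpace E] [BorelSpace E]

lemma upper_mem (ν : Measure E) [ν.IsAddHaarMeasure] (μ : Measure E) [IsProbabilityMeasure μ] :
    ∀ᵐ x ∂μ, ∃ rx > (0:ℝ), ∀ r : ℝ, 0 < r → r < rx →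
      ENNReal.ofReal (r ^ ((Module.finrank ℝ E : ℝ) + 3)) ≤ μ (closedBall x r) := by
  classical
  set dd := Module.finrank ℝ E with hdd
  set dR : ℝ := (dd : ℝ) with hdR
  set u : ℕ → ℝ := fun k => (1/2 : ℝ) ^ k with hu
  have hu_pos : ∀ k, 0 < u k := fun k => by positivity
  have hu_le1 : ∀ k, u k ≤ 1 := fun k => pow_le_one₀ (by norm_num) (by norm_num)
  set bad : ℕ → ℕ → Set E := fun R k =>
    {x | x ∈ closedBall (0:E) R ∧ μ (closedBall x (u k)) < ENNReal.ofReal ((u k) ^ (dR + 2))}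
    with hbaddef
  have hbad : ∀ R k, μ (bad R k) ≤
      ENNReal.ofReal (((R:ℝ)+1) ^ dd * 3 ^ dd) * (ENNReal.ofReal (1/4)) ^ k := by
    intro R k
    have hcle := cover_measure_le (E := E) ν μ (A := bad R k)
      (V := closedBall (0:E) ((R:ℝ)+1)) (w := u k)
      (Q := ((R:ℝ)+1) ^ dd) (cc := (u k) ^ (dR + 2)) (hu_pos k)
      (by positivity) (by positivity)
      (by
        intro y hy z hz
        simp only [mem_closedBall] at *
        have h1 : dist y (0:E) ≤ R := hy.1
        have h2 : dist z y ≤ u k / 3 := hz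
        have := dist_triangle z y (0:E)
        have h3 : u k / 3 ≤ 1 := by linarith [hu_le1 k, hu_pos k]
        linarith)
      (le_of_eq (Measure.addHaar_closedBall' ν 0 (by positivity)))
      (fun y hy => hy.2.le)
    refine hcle.trans (le_of_eq ?_)
    have hukpos := hu_pos k
    have hepow : (u k) ^ (dR + 2) = (u k) ^ (dd + 2 : ℕ) := by
      rw [← Real.rpow_natCast (u k) (dd + 2)]
      congr 1
      push_cast
      rfl
    have hreal : ((R:ℝ)+1) ^ dd * (3 / u k) ^ dd * (u k) ^ (dR + 2)
        = (((R:ℝ)+1) ^ dd * 3 ^ dd) * ((1/4 : ℝ)) ^ k := by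
      have h4 : ((1/4 : ℝ)) ^ k = (u k) ^ 2 := by
        have h5 : (u k) ^ 2 = (1/2 : ℝ) ^ (2 * k) := by
          rw [hu]; dsimp only; rw [← pow_mul, mul_comm]
        rw [h5, show ((1/4:ℝ)) = (1/2)^2 by norm_num, ← pow_mul]
      rw [hepow, div_pow, pow_add, h4]
      field_simp
    rw [hreal, ENNReal.ofReal_mul (by positivity), ENNReal.ofReal_pow (by norm_num)]
  have hsum : ∀ R : ℕ, ∑' k, μ (bad R k) ≠ ⊤ := by
    intro R
    have : ∑' k, μ (bad R k) ≤
        ENNReal.ofReal (((R:ℝ)+1) ^ dd * 3 ^ dd) * ∑' k, (ENNReal.ofReal (1/4)) ^ k := by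
      rw [← ENNReal.tsum_mul_left]
      exact ENNReal.tsum_le_tsum (hbad R)
    refine ne_top_of_le_ne_top ?_ this
    rw [ENNReal.tsum_geometric]
    apply ENNReal.mul_ne_top ENNReal.ofReal_ne_top
    simp only [ne_eq, ENNReal.inv_eq_top, tsub_eq_zero_iff_le]
    intro h
    have := ENNReal.ofReal_lt_one.2 (show (1/4:ℝ) < 1 by norm_num)
    exact absurd h (not_le.2 this)
  have hlim : ∀ᵐ x ∂μ, ∀ R : ℕ, x ∉ limsup (bad R) atTop := by
    rw [ae_all_iff]
    intro R
    exact measure_eq_zero_iff_ae_notMem.mp (measure_limsup_atTop_eq_zero (hsum R))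
  filter_upwards [hlim] with x hx
  set R : ℕ := Nat.ceil ‖x‖ with hR
  have hxR : x ∈ closedBall (0:E) R := by
    simp only [mem_closedBall, dist_zero_right]
    exact Nat.le_ceil _
  have hfreq := hx R
  rw [Filter.mem_limsup_iff_frequently_mem, Filter.not_frequently] at hfreq
  rw [Filter.eventually_atTop] at hfreq
  obtain ⟨K, hK⟩ := hfreq
  refine ⟨min (u K) ((1/2 : ℝ) ^ (dd + 2)), by positivity, ?_⟩
  intro r hr0 hrlt
  have hrK : r < u K := lt_of_lt_of_le hrlt (min_le_left _ _)
  have hrsmall : r < (1/2 : ℝ) ^ (dd + 2) := lt_of_lt_of_le hrlt (min_le_right _ _)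
  -- find j0 minimal with u j0 < r
  have hex : ∃ j, u j < r := by
    obtain ⟨n, hn⟩ := exists_pow_lt_of_lt_one hr0 (show (1/2:ℝ) < 1 by norm_num)
    exact ⟨n, hn⟩
  set j0 := Nat.find hex with hj0
  have hj0lt : u j0 < r := Nat.find_spec hex
  have hj0min : ∀ j < j0, ¬ u j < r := fun j hj => Nat.find_min hex hj
  have hKj0 : K < j0 := by
    by_contra h
    push_neg at h
    have : u j0 ≥ u K := by
      apply pow_le_pow_of_le_one (by norm_num) (by norm_num) h
    linarith
  have hj0pos : 0 < j0 := by omega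
  set k := j0 - 1 with hk
  have hkK : K ≤ k := by omega
  have hkj0 : j0 = k + 1 := by omega
  have hukr : r ≤ u k := by
    by_contra h
    push_neg at h
    exact hj0min k (by omega) h
  have huj0 : u j0 = u k / 2 := by
    rw [hkj0, hu]
    simp [pow_succ]
    ring
  have hxgood := hK j0 (by omega)
  simp only [hbaddef, Set.mem_setOf_eq, not_and, not_lt] at hxgood
  have hxg2 : ENNReal.ofReal ((u j0) ^ (dR + 2)) ≤ μ (closedBall x (u j0)) := hxgood hxR
  have hmono : μ (closedBall x (u j0)) ≤ μ (closedBall x r) :=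
    measure_mono (closedBall_subset_closedBall hj0lt.le)
  refine le_trans ?_ (hxg2.trans hmono)
  apply ENNReal.ofReal_le_ofReal
  have huj0r : r / 2 ≤ u j0 := by rw [huj0]; linarith
  have h1 : (r/2 : ℝ) ^ (dR + 2) ≤ (u j0) ^ (dR + 2) :=
    Real.rpow_le_rpow (by positivity) huj0r (by positivity)
  refine le_trans ?_ h1
  -- r ^ (dR+3) ≤ (r/2) ^ (dR+2)
  have hcast : dR + 2 = ((dd + 2 : ℕ) : ℝ) := by push_cast; ring
  have hrhalf : r ≤ (1/2 : ℝ) ^ (dR + 2 : ℝ) := by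
    rw [hcast, Real.rpow_natCast]
    exact hrsmall.le
  have hsplit : (r/2 : ℝ) ^ (dR + 2) = r ^ (dR + 2) * (1/2 : ℝ) ^ (dR + 2 : ℝ) := by
    rw [show (r/2 : ℝ) = r * (1/2) by ring]
    exact Real.mul_rpow hr0.le (by norm_num)
  have hsplit2 : r ^ (dR + 3) = r ^ (dR + 2) * r := by
    rw [show dR + 3 = (dR + 2) + 1 by ring, Real.rpow_add hr0, Real.rpow_one]
  rw [hsplit, hsplit2]
  exact mul_le_mul_of_nonneg_left hrhalf (by positivity)
end aux4

set_option maxHeartbeats 2000000 in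
/-- Theorem 1: if `underline dim μ > d - 1` then for every
`δ > (overline dim μ - (d-1)) / (underline dim μ - (d-1))` and `η ∈ (0,1]`,
`μ(E_μ(δ,η)) = 0`, in any norm on `ℝ^d`. -/
theorem stmt2 {E : Type*} [NormedAddCommGroup E] [NormedSpace ℝ E]
    [FiniteDimensional ℝ E] [MeasurableSpace E] [BorelSpace E]
    (d : ℕ) (hrank : Module.finrank ℝ E = d)
    (μ : Measure E) [IsProbabilityMeasure μ] [μ.Regular]
    (hlow : (d : ℝ) - 1 < lowerDim μ)
    (δ η : ℝ)
    (hδ : (upperDim μ - ((d : ℝ) - 1)) / (lowerDim μ - ((d : ℝ) - 1)) < δ)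
    (hη : η ∈ Set.Ioc (0 : ℝ) 1) :
    μ (Eset μ δ η) = 0 := by
  classical
  obtain ⟨hη0, hη1⟩ := hη
  set S := {α : ℝ | 0 ≤ α ∧ ∀ᵐ x ∂μ, ∃ rx > (0 : ℝ), ∀ r : ℝ, 0 < r → r < rx →
    μ (closedBall x r) ≤ ENNReal.ofReal (r ^ α)} with hSdef
  set T := {β : ℝ | 0 ≤ β ∧ ∀ᵐ x ∂μ, ∃ rx > (0 : ℝ), ∀ r : ℝ, 0 < r → r < rx →
    ENNReal.ofReal (r ^ β) ≤ μ (closedBall x r)} with hTdef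
  have hLdef : lowerDim μ = sSup S := rfl
  have hBdef : upperDim μ = sInf T := rfl
  set ν : Measure E := (Module.finBasis ℝ E).addHaar with hνdef
  have hT3 : ((d:ℝ) + 3) ∈ T := by
    refine ⟨by positivity, ?_⟩
    have h := upper_mem ν μ
    rw [hrank] at h
    exact h
  have hS0 : (0:ℝ) ∈ S := by
    refine ⟨le_rfl, ae_of_all _ fun x => ⟨1, one_pos, fun r hr0 _ => ?_⟩⟩
    rw [Real.rpow_zero, ENNReal.ofReal_one]
    exact prob_le_one
  have hST : ∀ α ∈ S, ∀ β ∈ T, α ≤ β := by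
    rintro α ⟨hα0, hαae⟩ β ⟨hβ0, hβae⟩
    obtain ⟨x, ⟨r1, hr1, h1⟩, ⟨r2, hr2, h2⟩⟩ := (hαae.and hβae).exists
    have hrmin : 0 < min (min r1 r2) 1 := lt_min (lt_min hr1 hr2) one_pos
    set r := min (min r1 r2) 1 / 2 with hrdef
    have hr0 : 0 < r := by positivity
    have hrle : r ≤ min (min r1 r2) 1 / 2 := le_rfl
    have hlt1 : r < 1 := by
      have := min_le_right (min r1 r2) 1
      rw [hrdef]; linarith
    have hlta : r < r1 := by
      have h3 := min_le_left (min r1 r2) 1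
      have h4 := min_le_left r1 r2
      rw [hrdef]; linarith
    have hltb : r < r2 := by
      have h3 := min_le_left (min r1 r2) 1
      have h4 := min_le_right r1 r2
      rw [hrdef]; linarith
    have hchain := (h2 r hr0 hltb).trans (h1 r hr0 hlta)
    rw [ENNReal.ofReal_le_ofReal_iff (by positivity)] at hchain
    exact (Real.rpow_le_rpow_left_iff_of_base_lt_one hr0 hlt1).mp hchain
  have hSne : S.Nonempty := ⟨0, hS0⟩
  have hTne : T.Nonempty := ⟨_, hT3⟩
  have hLB : sSup S ≤ sInf T :=
    csSup_le hSne fun α hα => le_csInf hTne fun β hβ => hST α hα β hβ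
  have hLc : (0:ℝ) < lowerDim μ - ((d:ℝ)-1) := by linarith
  have hδ1 : 1 < δ := by
    have h1 : (1:ℝ) ≤ (upperDim μ - ((d:ℝ)-1)) / (lowerDim μ - ((d:ℝ)-1)) := by
      rw [le_div_iff₀ hLc]
      have := hLB
      rw [← hLdef, ← hBdef] at this
      linarith
    linarith
  -- dispatch the trivial 0-dimensional case
  rcases Nat.eq_zero_or_pos d with hd0 | hd1
  · have hsub : Subsingleton E := by
      rw [← Module.finrank_zero_iff (R := ℝ)]
      omega
    suffices hempty : Eset μ δ η = ∅ by rw [hempty, measure_empty]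
    ext x
    simp only [Eset, mem_setOf_eq, mem_empty_iff_false, iff_false]
    rintro ⟨rs, h01, _, hann⟩
    have h := hann 0
    obtain ⟨hr0, hr1⟩ := h01 0
    set r := rs 0
    have hrδ : r ^ δ < r := by
      have := Real.rpow_lt_rpow_of_exponent_gt hr0 hr1 hδ1
      rwa [Real.rpow_one] at this
    have hcb : closedBall x (r - r ^ δ) = univ := by
      apply eq_univ_iff_forall.2
      intro y
      have : y = x := Subsingleton.elim y x
      simp [this, mem_closedBall, dist_self]
      have : 0 < r ^ δ := Real.rpow_pos_of_pos hr0 δ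
      linarith
    have hannx : annulus x r δ = ∅ := by
      rw [annulus, hcb, diff_univ]
    rw [hannx, measure_empty, nonpos_iff_eq_zero, mul_eq_zero] at h
    rcases h with h | h
    · rw [ENNReal.ofReal_eq_zero] at h; linarith
    · have : x ∈ closedBall x r := mem_closedBall_self hr0.le
      have hpos : 0 < μ (closedBall x r) := by
        have : closedBall x r = univ := eq_univ_iff_forall.2 fun y => by
          simp [Subsingleton.elim y x, mem_closedBall, dist_self, hr0.le]
        rw [this, measure_univ]
        norm_num
      rw [h] at hpos
      exact absurd hpos (lt_irrefl 0)
  -- main case : 1 ≤ d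
  have hg : 0 < δ * (lowerDim μ - ((d:ℝ)-1)) - (upperDim μ - ((d:ℝ)-1)) := by
    have := (div_lt_iff₀ hLc).mp hδ
    linarith
  set g := δ * (lowerDim μ - ((d:ℝ)-1)) - (upperDim μ - ((d:ℝ)-1)) with hgdef
  set ε := min ((lowerDim μ - ((d:ℝ)-1))/2) (g/(2*(δ+1))) with hεdef
  have hεpos : 0 < ε := lt_min (by linarith) (div_pos hg (by linarith))
  obtain ⟨α, hαS, hαgt⟩ := exists_lt_of_lt_csSup hSne
    (show lowerDim μ - ε < sSup S by rw [← hLdef]; linarith)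
  obtain ⟨β, hβT, hβlt⟩ := exists_lt_of_csInf_lt hTne
    (show sInf T < upperDim μ + ε by rw [← hBdef]; linarith)
  have hαc : (d:ℝ)-1 < α := by
    have h1 : ε ≤ (lowerDim μ - ((d:ℝ)-1))/2 := min_le_left _ _
    linarith
  have hθpos : 0 < ((d:ℝ)-1) + δ*(α - ((d:ℝ)-1)) - β := by
    have h1 : ε ≤ g/(2*(δ+1)) := min_le_right _ _
    have h2 : (δ+1)*ε ≤ g/2 := by
      have h3 := mul_le_mul_of_nonneg_left h1 (show (0:ℝ) ≤ δ+1 by linarith)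
      have h4 : (δ+1) * (g/(2*(δ+1))) = g/2 := by field_simp
      linarith
    have h5 : 0 < δ * (α - (lowerDim μ - ε)) := mul_pos (by linarith) (by linarith)
    nlinarith [hg, hβlt, h2, h5]
  set θ := ((d:ℝ)-1) + δ*(α - ((d:ℝ)-1)) - β with hθdef
  obtain ⟨hα0, hαae⟩ := hαS
  obtain ⟨hβ0, hβae⟩ := hβT
  set G : ℕ → Set E := fun m => {x | ∀ r:ℝ, 0 < r → r < 1/((m:ℝ)+1) →
    μ (closedBall x r) ≤ ENNReal.ofReal (r^α)} with hGdef
  set H : ℕ → Set E := fun m => {x | ∀ r:ℝ, 0 < r → r < 1/((m:ℝ)+1) →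
    ENNReal.ofReal (r^β) ≤ μ (closedBall x r)} with hHdef
  have key : ∀ m:ℕ, μ (Eset μ δ η ∩ (G m ∩ H m)) = 0 := by
    intro m
    set s := Eset μ δ η ∩ (G m ∩ H m) with hsdef
    set P : E → Prop := fun x => Tendsto
      (fun r => μ (s ∩ closedBall x r) / μ (closedBall x r)) (𝓝[>] 0) (𝓝 1) with hPdef
    have hdens : ∀ᵐ x ∂μ.restrict s, P x := Besicovitch.ae_tendsto_measure_inter_div μ s
    have hpoint : ∀ x ∈ s, ¬ P x := by
      rintro x ⟨hxE, hxG, hxH⟩ htend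
      set C0 : ℝ := (d:ℝ) * 2^(d-1) * 3^(d+1) with hC0def
      have hdpos : (0:ℝ) < (d:ℝ) := by exact_mod_cast hd1
      have hC0 : 0 < C0 := by positivity
      have hη4C : 0 < η/(4*C0) := by positivity
      set ε1 : ℝ := min (1/((m:ℝ)+1)) ((η/(4*C0)) ^ θ⁻¹) with hε1def
      have hε1pos : 0 < ε1 := lt_min (by positivity) (Real.rpow_pos_of_pos hη4C _)
      obtain ⟨rs, h01, hrtend, hann⟩ := hxE
      have hrtend' : Tendsto rs atTop (𝓝[>] (0:ℝ)) :=
        tendsto_nhdsWithin_of_tendsto_nhds_of_eventually_within _ hrtend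
          (Eventually.of_forall fun n => (h01 n).1)
      have hlt1 : ENNReal.ofReal (1-η/2) < 1 := ENNReal.ofReal_lt_one.2 (by linarith)
      have hev2 : ∀ᶠ n in atTop, ENNReal.ofReal (1-η/2) <
          μ (s ∩ closedBall x (rs n)) / μ (closedBall x (rs n)) :=
        hrtend'.eventually (htend.eventually (eventually_gt_nhds hlt1))
      have hev1 : ∀ᶠ n in atTop, rs n < ε1 := hrtend.eventually (gt_mem_nhds hε1pos)
      obtain ⟨n, hn1, hn2⟩ := (hev1.and hev2).exists
      set r := rs n with hrdef
      obtain ⟨hr0, hr1⟩ := h01 n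
      set w := r ^ δ with hwdef
      have hw0 : 0 < w := Real.rpow_pos_of_pos hr0 δ
      have hwr : w < r := by
        have := Real.rpow_lt_rpow_of_exponent_gt hr0 hr1 hδ1
        rwa [Real.rpow_one] at this
      have hrm : r < 1/((m:ℝ)+1) := lt_of_lt_of_le hn1 (min_le_left _ _)
      have hrε : r < (η/(4*C0)) ^ θ⁻¹ := lt_of_lt_of_le hn1 (min_le_right _ _)
      set t := toMeasurable μ s with htdef
      have htm : MeasurableSet t := measurableSet_toMeasurable μ s
      set B := closedBall x r with hB2def
      have hμBlb : ENNReal.ofReal (r^β) ≤ μ B := hxH r hr0 hrm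
      have hμBtop : μ B ≠ ⊤ := measure_ne_top μ B
      have hrβpos : 0 < r^β := Real.rpow_pos_of_pos hr0 β
      have hμB0 : μ B ≠ 0 := by
        intro h
        rw [h, nonpos_iff_eq_zero, ENNReal.ofReal_eq_zero] at hμBlb
        linarith
      have hsB : μ (t ∩ B) = μ (s ∩ B) :=
        Measure.measure_toMeasurable_inter measurableSet_closedBall (measure_ne_top μ s)
      have hdens2 : ENNReal.ofReal (1-η/2) * μ B < μ (s ∩ B) :=
        (ENNReal.lt_div_iff_mul_lt (Or.inl hμB0) (Or.inl hμBtop)).mp hn2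
      have hBt_split : μ (B ∩ t) + μ (B \ t) = μ B := measure_inter_add_diff B htm
      have hofReal_split : ENNReal.ofReal (1-η/2) + ENNReal.ofReal (η/2) = 1 := by
        rw [← ENNReal.ofReal_add (by linarith) (by linarith)]
        norm_num
      have hBdiff : μ (B \ t) ≤ ENNReal.ofReal (η/2) * μ B := by
        have h1 : ENNReal.ofReal (1-η/2) * μ B ≤ μ (B ∩ t) := by
          rw [inter_comm, hsB]
          exact hdens2.le
        have h6 : ENNReal.ofReal (1-η/2)*μ B + μ (B \ t) ≤
            ENNReal.ofReal (1-η/2)*μ B + ENNReal.ofReal (η/2)*μ B := by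
          rw [← add_mul, hofReal_split, one_mul]
          calc ENNReal.ofReal (1-η/2)*μ B + μ (B \ t) ≤ μ (B ∩ t) + μ (B \ t) :=
                add_le_add_left h1 _
            _ = μ B := hBt_split
        exact (ENNReal.add_le_add_iff_left
          (ENNReal.mul_ne_top ENNReal.ofReal_ne_top hμBtop)).mp h6
      set ann := annulus x r δ with hanndef
      have hann_sub_B : ann ⊆ B := diff_subset
      have hann_meas : MeasurableSet ann :=
        measurableSet_closedBall.diff measurableSet_closedBall
      have hann_split : μ (ann ∩ t) + μ (ann \ t) = μ ann := measure_inter_add_diff ann htm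
      have hηsplit : ENNReal.ofReal (η/2) + ENNReal.ofReal (η/2) = ENNReal.ofReal η := by
        rw [← ENNReal.ofReal_add (by linarith) (by linarith)]
        norm_num
      have hlow_ann : ENNReal.ofReal (η/2) * μ B ≤ μ (ann ∩ t) := by
        have h2 : μ (ann \ t) ≤ ENNReal.ofReal (η/2) * μ B :=
          le_trans (measure_mono (diff_subset_diff_left hann_sub_B)) hBdiff
        have h3 : ENNReal.ofReal η * μ B ≤ μ ann := hann n
        have h5 : ENNReal.ofReal (η/2)*μ B + ENNReal.ofReal (η/2)*μ B ≤
            μ (ann ∩ t) + ENNReal.ofReal (η/2)*μ B := by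
          calc ENNReal.ofReal (η/2)*μ B + ENNReal.ofReal (η/2)*μ B
              = ENNReal.ofReal η * μ B := by rw [← add_mul, hηsplit]
            _ ≤ μ ann := h3
            _ = μ (ann ∩ t) + μ (ann \ t) := hann_split.symm
            _ ≤ μ (ann ∩ t) + ENNReal.ofReal (η/2)*μ B := add_le_add_right h2 _
        exact (ENNReal.add_le_add_iff_right
          (ENNReal.mul_ne_top ENNReal.ofReal_ne_top hμBtop)).mp h5
      have hannts : μ (ann ∩ t) = μ (ann ∩ s) := by
        rw [inter_comm ann t, inter_comm ann s]
        exact Measure.measure_toMeasurable_inter hann_meas (measure_ne_top μ s)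
      set Q : ℝ := (d:ℝ)*(r+w)^(d-1)*(3*w) with hQdef
      have hQ0 : 0 ≤ Q := by positivity
      have hannw : ann = closedBall x r \ closedBall x (r - w) := by
        rw [hanndef, annulus, hwdef]
      have hub : μ (ann ∩ s) ≤ ENNReal.ofReal (Q * (3/w)^d * w^α) := by
        have hsubV : ∀ y ∈ ann ∩ s, closedBall y (w/3) ⊆
            (closedBall x (r+w) \ closedBall x (r-2*w)) := by
          rintro y ⟨hyann, _⟩ z hz
          rw [hannw] at hyann
          obtain ⟨hy1, hy2⟩ := hyann
          rw [mem_closedBall] at hy1 hz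
          rw [mem_closedBall, not_le] at hy2
          constructor
          · rw [mem_closedBall]
            have := dist_triangle z y x
            linarith
          · rw [mem_closedBall, not_le]
            have h4 := dist_triangle y z x
            rw [dist_comm y z] at h4
            linarith
        have hνV : ν (closedBall x (r+w) \ closedBall x (r-2*w)) ≤
            ENNReal.ofReal Q * ν (closedBall (0:E) 1) := by
          rcases le_or_gt 0 (r - 2*w) with hcase | hcase
          · have hsub2 : closedBall x (r-2*w) ⊆ closedBall x (r+w) :=
              closedBall_subset_closedBall (by linarith)
            rw [measure_diff hsub2 measurableSet_closedBall.nullMeasurableSet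
              measure_closedBall_lt_top.ne, tsub_le_iff_right,
              Measure.addHaar_closedBall' ν x (show (0:ℝ) ≤ r+w by linarith),
              Measure.addHaar_closedBall' ν x hcase, hrank,
              ← add_mul, ← ENNReal.ofReal_add hQ0 (by positivity)]
            apply mul_le_mul' _ le_rfl
            apply ENNReal.ofReal_le_ofReal
            have hppl := pow_sub_pow_le' hcase (show r-2*w ≤ r+w by linarith) d
            have h3w : (r+w) - (r-2*w) = 3*w := by ring
            rw [h3w] at hppl
            rw [hQdef]
            linarith
          · rw [closedBall_eq_empty.2 hcase, diff_empty,
              Measure.addHaar_closedBall' ν x (show (0:ℝ) ≤ r+w by linarith), hrank]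
            apply mul_le_mul' _ le_rfl
            apply ENNReal.ofReal_le_ofReal
            have h12 : (r+w:ℝ)^d = (r+w)^(d-1)*(r+w) := by
              conv_lhs => rw [show d = (d-1)+1 by omega]
              rw [pow_succ]
            rw [hQdef, h12]
            have h13 : r + w ≤ 3*w := by linarith
            calc (r+w:ℝ)^(d-1)*(r+w) ≤ (r+w)^(d-1)*(3*w) :=
                  mul_le_mul_of_nonneg_left h13 (by positivity)
              _ ≤ (d:ℝ)*((r+w)^(d-1)*(3*w)) :=
                  le_mul_of_one_le_left (by positivity) (by exact_mod_cast hd1)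
              _ = (d:ℝ)*(r+w)^(d-1)*(3*w) := by ring
        have hballV : ∀ y ∈ ann ∩ s, μ (closedBall y w) ≤ ENNReal.ofReal (w^α) := by
          rintro y ⟨_, hys⟩
          exact hys.2.1 w hw0 (lt_trans hwr hrm)
        have hcov := cover_measure_le (E := E) ν μ hw0 hQ0
          (show (0:ℝ) ≤ w^α by positivity) hsubV hνV hballV
        rwa [hrank] at hcov
      have hfinal : ENNReal.ofReal (η/2 * r^β) ≤ ENNReal.ofReal (Q * (3/w)^d * w^α) := by
        calc ENNReal.ofReal (η/2 * r^β) = ENNReal.ofReal (η/2) * ENNReal.ofReal (r^β) :=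
              ENNReal.ofReal_mul (by linarith)
          _ ≤ ENNReal.ofReal (η/2) * μ B := mul_le_mul' le_rfl hμBlb
          _ ≤ μ (ann ∩ t) := hlow_ann
          _ = μ (ann ∩ s) := hannts
          _ ≤ _ := hub
      have hreal : η/2 * r^β ≤ Q * (3/w)^d * w^α :=
        (ENNReal.ofReal_le_ofReal_iff (by positivity)).mp hfinal
      have hQbound : Q * (3/w)^d * w^α ≤ C0 * r^(θ+β) := by
        have h8 : (r+w:ℝ)^(d-1) ≤ (2*r)^(d-1) :=
          pow_le_pow_left₀ (by positivity) (by linarith) _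
        have e1 : Q * (3/w)^d * w^α ≤ ((d:ℝ)*(2*r)^(d-1)*(3*w)) * (3/w)^d * w^α := by
          have hQle : Q ≤ (d:ℝ)*(2*r)^(d-1)*(3*w) := by
            rw [hQdef]
            apply mul_le_mul_of_nonneg_right _ (by linarith)
            exact mul_le_mul_of_nonneg_left h8 (by positivity)
          apply mul_le_mul_of_nonneg_right _ (by positivity)
          exact mul_le_mul_of_nonneg_right hQle (by positivity)
        have e2 : ((d:ℝ)*(2*r)^(d-1)*(3*w)) * (3/w)^d * w^α
            = C0 * (r^(d-1) * (w * w^α / w^(d:ℕ))) := by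
          rw [hC0def, mul_pow, div_pow, pow_succ]
          field_simp
        have e3 : w * w^α / w^(d:ℕ) = w^(1+α-(d:ℝ)) := by
          rw [show 1+α-(d:ℝ) = (1+α) - ((d:ℕ):ℝ) by push_cast; ring,
            Real.rpow_sub hw0, Real.rpow_add hw0, Real.rpow_one, Real.rpow_natCast]
        have e4 : (r:ℝ)^(d-1:ℕ) = r^((d:ℝ)-1) := by
          rw [← Real.rpow_natCast r (d-1)]
          congr 1
          rw [Nat.cast_sub hd1]
          norm_num
        have e5 : w^(1+α-(d:ℝ)) = r^(δ*(1+α-(d:ℝ))) := by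
          rw [hwdef, ← Real.rpow_mul hr0.le]
        have e6 : r^((d:ℝ)-1) * r^(δ*(1+α-(d:ℝ))) = r^(θ+β) := by
          rw [← Real.rpow_add hr0]
          congr 1
          rw [hθdef]
          ring
        calc Q * (3/w)^d * w^α ≤ ((d:ℝ)*(2*r)^(d-1)*(3*w)) * (3/w)^d * w^α := e1
          _ = C0 * (r^(d-1) * (w * w^α / w^(d:ℕ))) := e2
          _ = C0 * (r^((d:ℝ)-1) * r^(δ*(1+α-(d:ℝ)))) := by rw [e3, e4, e5]
          _ = C0 * r^(θ+β) := by rw [e6]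
      have h9 : r^θ < η/(4*C0) := by
        have h10 : ((η/(4*C0))^θ⁻¹)^θ = η/(4*C0) := by
          rw [← Real.rpow_mul hη4C.le, inv_mul_cancel₀ hθpos.ne', Real.rpow_one]
        have := Real.rpow_lt_rpow hr0.le hrε hθpos
        rwa [h10] at this
      have hrθ : C0 * r^θ < η/2 := by
        have h14 := mul_lt_mul_of_pos_left h9 hC0
        have h11 : C0 * (η/(4*C0)) = η/4 := by field_simp
        rw [h11] at h14
        linarith
      have hcontr := hreal.trans hQbound
      rw [Real.rpow_add hr0, ← mul_assoc] at hcontr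
      have h7 : η/2 ≤ C0 * r^θ := le_of_mul_le_mul_right hcontr hrβpos
      linarith
    have hssub2 : s ⊆ {x | ¬ P x} := fun x hx => hpoint x hx
    refine le_antisymm ?_ zero_le
    calc μ s = μ.restrict s s := (Measure.restrict_apply_self μ s).symm
      _ ≤ μ.restrict s {x | ¬ P x} := measure_mono hssub2
      _ = 0 := ae_iff.mp hdens
  -- conclusion from key
  set badα := {x : E | ¬ ∃ rx > (0:ℝ), ∀ r : ℝ, 0 < r → r < rx →
    μ (closedBall x r) ≤ ENNReal.ofReal (r ^ α)} with hbadα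
  set badβ := {x : E | ¬ ∃ rx > (0:ℝ), ∀ r : ℝ, 0 < r → r < rx →
    ENNReal.ofReal (r ^ β) ≤ μ (closedBall x r)} with hbadβ
  have hbadα0 : μ badα = 0 := by
    rw [hbadα]; exact ae_iff.mp hαae
  have hbadβ0 : μ badβ = 0 := by
    rw [hbadβ]; exact ae_iff.mp hβae
  have hsub : Eset μ δ η ⊆ (⋃ m, Eset μ δ η ∩ (G m ∩ H m)) ∪ (badα ∪ badβ) := by
    intro x hx
    by_cases hxa : ∃ rx > (0:ℝ), ∀ r : ℝ, 0 < r → r < rx →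
        μ (closedBall x r) ≤ ENNReal.ofReal (r ^ α)
    · by_cases hxb : ∃ rx > (0:ℝ), ∀ r : ℝ, 0 < r → r < rx →
          ENNReal.ofReal (r ^ β) ≤ μ (closedBall x r)
      · left
        obtain ⟨r1, hr1, hxa'⟩ := hxa
        obtain ⟨r2, hr2, hxb'⟩ := hxb
        obtain ⟨m, hm⟩ := exists_nat_one_div_lt (lt_min hr1 hr2)
        refine mem_iUnion.2 ⟨m, hx, fun r h0 hlt => hxa' r h0 ?_, fun r h0 hlt => hxb' r h0 ?_⟩
        · exact lt_trans hlt (lt_of_lt_of_le hm (min_le_left _ _))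
        · exact lt_trans hlt (lt_of_lt_of_le hm (min_le_right _ _))
      · right; right; exact hxb
    · right; left; exact hxa
  refine le_antisymm ?_ zero_le
  calc μ (Eset μ δ η) ≤ μ ((⋃ m, Eset μ δ η ∩ (G m ∩ H m)) ∪ (badα ∪ badβ)) :=
        measure_mono hsub
    _ ≤ μ (⋃ m, Eset μ δ η ∩ (G m ∩ H m)) + μ (badα ∪ badβ) := measure_union_le _ _
    _ ≤ 0 + (μ badα + μ badβ) := by
        gcongr
        · exact le_of_eq (measure_iUnion_null key)
        · exact measure_union_le _ _
    _ = 0 := by rw [hbadα0, hbadβ0]; simp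
end

section
/- For every d ≥ 1, δ ≥ 1 and fixed norm on ℝ^d, there exists a constant C_d > 0 such that for every x ∈ ℝ^d, 0 < r < 1, the annulus A(x,r,δ) = B(x,r) \ B(x, r − r^δ) can be covered by at most C_d · r^{(d−1)(1−δ)} balls of radius r^δ. -/
open MeasureTheory Metric Set Filter

lemma my_pow_sub_pow_le (n : ℕ) {a b : ℝ} (hb : 0 ≤ b) (hab : b ≤ a) :
    a ^ n - b ^ n ≤ n * a ^ (n - 1) * (a - b) := by
  have ha : 0 ≤ a := hb.trans hab
  rw [← geom_sum₂_mul a b n]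
  have hsum : (∑ i ∈ Finset.range n, a ^ i * b ^ (n - 1 - i)) ≤ n * a ^ (n - 1) := by
    calc (∑ i ∈ Finset.range n, a ^ i * b ^ (n - 1 - i))
        ≤ ∑ _i ∈ Finset.range n, a ^ (n - 1) := by
          apply Finset.sum_le_sum
          intro i hi
          have hi' : i ≤ n - 1 := by
            have := Finset.mem_range.1 hi; omega
          calc a ^ i * b ^ (n - 1 - i) ≤ a ^ i * a ^ (n - 1 - i) := by
                have := pow_le_pow_left₀ hb hab (n - 1 - i)
                exact mul_le_mul_of_nonneg_left this (pow_nonneg ha i)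
            _ = a ^ (i + (n - 1 - i)) := (pow_add a i (n - 1 - i)).symm
            _ = a ^ (n - 1) := by congr 1; omega
      _ = n * a ^ (n - 1) := by
          simp [Finset.sum_const, nsmul_eq_mul]
  exact mul_le_mul_of_nonneg_right hsum (sub_nonneg.2 hab)

lemma my_count {E : Type*} [NormedAddCommGroup E] [NormedSpace ℝ E] [FiniteDimensional ℝ E]
    [MeasurableSpace E] [BorelSpace E] [Nontrivial E]
    (μ : Measure E) [μ.IsAddHaarMeasure]
    (x : E) (a b ε : ℝ) (hε : 0 < ε) (hb : 0 ≤ b) (hba : b ≤ a)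
    (T : Finset E) (hsep : ∀ y ∈ T, ∀ z ∈ T, y ≠ z → ε < dist y z)
    (hT : ∀ y ∈ T, closedBall y (ε / 2) ⊆ closedBall x a \ ball x b) :
    (T.card : ℝ) * (ε / 2) ^ Module.finrank ℝ E
      ≤ a ^ Module.finrank ℝ E - b ^ Module.finrank ℝ E := by
  set n := Module.finrank ℝ E
  have hε2 : (0:ℝ) ≤ ε / 2 := by linarith
  have ha : 0 ≤ a := hb.trans hba
  have hdisj : (T : Set E).PairwiseDisjoint fun y => closedBall y (ε / 2) := by
    intro y hy z hz hyz
    exact closedBall_disjoint_closedBall (by have := hsep y hy z hz hyz; linarith)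
  have hmeas : μ (⋃ y ∈ T, closedBall y (ε / 2))
      = ∑ _y ∈ T, ENNReal.ofReal ((ε / 2) ^ n) * μ (ball (0:E) 1) := by
    rw [measure_biUnion_finset hdisj fun y _ => measurableSet_closedBall]
    exact Finset.sum_congr rfl fun y _ => Measure.addHaar_closedBall μ y hε2
  have hsub : (⋃ y ∈ T, closedBall y (ε / 2)) ⊆ closedBall x a \ ball x b :=
    Set.iUnion₂_subset hT
  have hdiff : μ (closedBall x a \ ball x b)
      = ENNReal.ofReal (a ^ n - b ^ n) * μ (ball (0:E) 1) := by
    rw [measure_diff (ball_subset_ball hba |>.trans ball_subset_closedBall)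
        measurableSet_ball.nullMeasurableSet measure_ball_lt_top.ne,
      Measure.addHaar_closedBall μ x ha, Measure.addHaar_ball μ x hb,
      ENNReal.ofReal_sub _ (pow_nonneg hb n), ENNReal.sub_mul fun _ _ => measure_ball_lt_top.ne]
  have hle : (∑ _y ∈ T, ENNReal.ofReal ((ε / 2) ^ n) * μ (ball (0:E) 1))
      ≤ ENNReal.ofReal (a ^ n - b ^ n) * μ (ball (0:E) 1) := by
    rw [← hmeas, ← hdiff]; exact measure_mono hsub
  rw [Finset.sum_const, nsmul_eq_mul, ← mul_assoc] at hle
  have hμ0 : μ (ball (0:E) 1) ≠ 0 := (measure_ball_pos μ _ one_pos).ne'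
  have hμtop : μ (ball (0:E) 1) ≠ ⊤ := measure_ball_lt_top.ne
  rw [ENNReal.mul_le_mul_iff_left hμ0 hμtop] at hle
  have h2 : ENNReal.ofReal ((T.card : ℝ) * (ε / 2) ^ n) ≤ ENNReal.ofReal (a ^ n - b ^ n) := by
    rwa [ENNReal.ofReal_mul (by positivity), ENNReal.ofReal_natCast]
  exact (ENNReal.ofReal_le_ofReal_iff (sub_nonneg.2 (pow_le_pow_left₀ hb hba n))).1 h2

/-- Covering lemma: for any `d ≥ 1`, `δ ≥ 1` and any norm on a `d`-dimensional
real normed space, there is `C_d > 0` such that for all `x` and `0 < r < 1`,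
the annulus `B(x,r) \ B(x, r - r^δ)` can be covered by at most
`C_d · r^((d-1)(1-δ))` balls of radius `r^δ`. -/
theorem stmt4 {E : Type*} [NormedAddCommGroup E] [NormedSpace ℝ E]
    [FiniteDimensional ℝ E]
    (d : ℕ) (hd : 1 ≤ d) (hrank : Module.finrank ℝ E = d)
    (δ : ℝ) (hδ : 1 ≤ δ) :
    ∃ C > (0 : ℝ), ∀ (x : E) (r : ℝ), 0 < r → r < 1 →
      ∃ S : Finset E, (S.card : ℝ) ≤ C * r ^ (((d : ℝ) - 1) * (1 - δ)) ∧
        closedBall x r \ closedBall x (r - r ^ δ) ⊆ ⋃ y ∈ S, closedBall y (r ^ δ) := by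
  have hnt : Nontrivial E := by
    apply Module.nontrivial_of_finrank_pos (R := ℝ) (M := E)
    rw [hrank]; omega
  classical
  borelize E
  let μ : Measure E := (Module.finBasis ℝ E).addHaar
  have hμH : μ.IsAddHaarMeasure := inferInstanceAs _
  have hdpos : (0:ℝ) < d := by exact_mod_cast hd
  refine ⟨(d : ℝ) * 4 ^ d, by positivity, fun x r hr hr1 => ?_⟩
  set ε := r ^ δ with hεdef
  have hε : 0 < ε := Real.rpow_pos_of_pos hr δ
  have hεr : ε ≤ r := by
    calc ε ≤ r ^ (1:ℝ) := Real.rpow_le_rpow_of_exponent_ge hr hr1.le hδ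
    _ = r := Real.rpow_one r
  set A := closedBall x r \ closedBall x (r - ε) with hA
  set a := r + ε / 2 with ha_def
  set b := max (r - ε - ε / 2) 0 with hb_def
  have hb : 0 ≤ b := le_max_right _ _
  have hba : b ≤ a := by
    apply max_le <;> [skip; skip] <;> simp only [ha_def] <;> linarith
  -- inclusion of small balls around points of A into the enlarged annulus
  have hincl : ∀ y ∈ A, closedBall y (ε / 2) ⊆ closedBall x a \ ball x b := by
    intro y hy w hw
    simp only [hA, Set.mem_diff, mem_closedBall, not_le] at hy
    simp only [mem_closedBall] at hw
    constructor
    · simp only [mem_closedBall, ha_def]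
      have := dist_triangle w y x
      linarith [hy.1]
    · simp only [mem_ball, not_lt, hb_def]
      apply max_le
      · have := dist_triangle y w x
        have h2 : dist y w ≤ ε / 2 := by rwa [dist_comm]
        linarith [hy.2]
      · exact dist_nonneg
  -- counting bound for separated subsets of A
  have count : ∀ T : Finset E, (↑T : Set E) ⊆ A →
      (∀ y ∈ T, ∀ z ∈ T, y ≠ z → ε < dist y z) →
      (T.card : ℝ) * (ε / 2) ^ d ≤ (d : ℝ) * 2 ^ d * r ^ (d - 1) * ε := by
    intro T hTA hTs
    have h1 := my_count μ x a b ε hε hb hba T hTs fun y hy => hincl y (hTA hy)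
    rw [hrank] at h1
    refine h1.trans ?_
    have h2 : a ^ d - b ^ d ≤ (d:ℝ) * a ^ (d - 1) * (a - b) := my_pow_sub_pow_le d hb hba
    have hab2 : a - b ≤ 2 * ε := by
      rcases le_total (r - ε - ε / 2) 0 with h | h
      · rw [hb_def, max_eq_right h, ha_def]; linarith
      · rw [hb_def, max_eq_left h, ha_def]; linarith
    have ha2r : a ≤ 2 * r := by rw [ha_def]; linarith
    have ha0 : 0 ≤ a := hb.trans hba
    calc a ^ d - b ^ d ≤ (d:ℝ) * a ^ (d - 1) * (a - b) := h2
      _ ≤ (d:ℝ) * (2 * r) ^ (d - 1) * (2 * ε) := by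
          gcongr <;> first | exact ha0 | exact ha2r | exact hab2 | exact sub_nonneg.2 hba | positivity
      _ = (d : ℝ) * 2 ^ d * r ^ (d - 1) * ε := by
          rw [mul_pow]
          have : (2:ℝ) ^ (d - 1) * 2 = 2 ^ d := by
            rw [← pow_succ]; congr 1; omega
          rw [← this]; ring
  -- maximal separated subset of A
  set P : Set ℕ := {n | ∃ T : Finset E, (↑T : Set E) ⊆ A ∧
      (∀ y ∈ T, ∀ z ∈ T, y ≠ z → ε < dist y z) ∧ T.card = n} with hP
  have h0P : 0 ∈ P := ⟨∅, by simp⟩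
  have hbdd : BddAbove P := by
    refine ⟨Nat.ceil (((d:ℝ) * 2 ^ d * r ^ (d - 1) * ε) / (ε / 2) ^ d), ?_⟩
    rintro n ⟨T, hTA, hTs, rfl⟩
    have h1 := count T hTA hTs
    have hpos : (0:ℝ) < (ε / 2) ^ d := by positivity
    have h2 : (T.card : ℝ) ≤ ((d:ℝ) * 2 ^ d * r ^ (d - 1) * ε) / (ε / 2) ^ d :=
      (le_div_iff₀ hpos).2 h1
    exact_mod_cast h2.trans (Nat.le_ceil _)
  obtain ⟨T, hTA, hTs, hTcard⟩ := Nat.sSup_mem ⟨0, h0P⟩ hbdd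
  have hcover : A ⊆ ⋃ y ∈ T, closedBall y ε := by
    intro p hp
    by_contra hpc
    simp only [Set.mem_iUnion, mem_closedBall, not_exists, not_le] at hpc
    have hpT : p ∉ T := by
      intro h
      have := hpc p h
      simp only [dist_self] at this
      linarith
    have hins : sSup P + 1 ∈ P := by
      refine ⟨insert p T, ?_, ?_, ?_⟩
      · rw [Finset.coe_insert]
        exact Set.insert_subset hp hTA
      · intro y hy z hz hyz
        rcases Finset.mem_insert.1 hy with rfl | hy' <;>
          rcases Finset.mem_insert.1 hz with rfl | hz'
        · exact absurd rfl hyz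
        · exact hpc z hz'
        · rw [dist_comm]; exact hpc y hy'
        · exact hTs y hy' z hz' hyz
      · rw [Finset.card_insert_of_notMem hpT, hTcard]
    have := le_csSup hbdd hins
    omega
  refine ⟨T, ?_, hcover⟩
  -- cardinality bound via rpow algebra
  have hpos : (0:ℝ) < (ε / 2) ^ d := by positivity
  have key : r ^ (((d:ℝ) - 1) * (1 - δ)) * ε ^ d = r ^ (d - 1) * ε := by
    have h1 : ε ^ d = r ^ (δ * d) := by
      rw [hεdef, ← Real.rpow_natCast (r ^ δ) d, ← Real.rpow_mul hr.le]
    have h2 : (r:ℝ) ^ (d - 1) = r ^ ((d:ℝ) - 1) := by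
      rw [← Real.rpow_natCast r (d - 1), Nat.cast_sub hd]
      norm_num
    rw [h1, h2, hεdef, ← Real.rpow_add hr, ← Real.rpow_add hr]
    congr 1; ring
  have h4 : (4:ℝ) ^ d = 2 ^ d * 2 ^ d := by rw [← mul_pow]; norm_num
  have e2 : (d:ℝ) * 4 ^ d * r ^ (((d:ℝ) - 1) * (1 - δ)) * (ε / 2) ^ d
      = (d:ℝ) * 2 ^ d * r ^ (d - 1) * ε := by
    rw [div_pow, h4]
    have h2d : (2:ℝ) ^ d ≠ 0 := by positivity
    field_simp
    linear_combination key
  have hfin : (T.card : ℝ) * (ε / 2) ^ d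
      ≤ ((d:ℝ) * 4 ^ d * r ^ (((d:ℝ) - 1) * (1 - δ))) * (ε / 2) ^ d := by
    calc (T.card : ℝ) * (ε / 2) ^ d ≤ (d:ℝ) * 2 ^ d * r ^ (d - 1) * ε := count T hTA hTs
      _ = ((d:ℝ) * 4 ^ d * r ^ (((d:ℝ) - 1) * (1 - δ))) * (ε / 2) ^ d := e2.symm
  exact le_of_mul_le_mul_right hfin hpos
end

section
/- There exists an integer N such that for every n ≥ N, for all radii r₁, r₂ with 2^{−n−1} ≤ r₁, r₂ ≤ 2^{−n}, and centers z₁, z₂ ∈ ℝ² satisfying 2^{−5n} ≤ ‖z₁ − z₂‖₂ ≤ 2^{−n}/30, the intersection of the annuli A(z₁,r₁,30) ∩ A(z₂,r₂,30) consists of at most two connected components, each of Euclidean diameter less than 24·2^{−13.5n}, where A(z,r,30) = B₂(z,r) \ B₂(z, r − r^{30}) with B₂ the closed Euclidean ball. -/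
open MeasureTheory Metric Set Filter

local notation "E2" => EuclideanSpace ℝ (Fin 2)

noncomputable def mk2 (a b : ℝ) : E2 := (WithLp.equiv 2 (Fin 2 → ℝ)).symm ![a, b]
@[simp] lemma mk2_zero (a b : ℝ) : mk2 a b 0 = a := rfl
@[simp] lemma mk2_one (a b : ℝ) : mk2 a b 1 = b := rfl
lemma ext2 {x y : E2} (h0 : x 0 = y 0) (h1 : x 1 = y 1) : x = y := by
  refine PiLp.ext fun i => ?_; fin_cases i <;> assumption
lemma normsq (x y : E2) : ‖x - y‖ ^ 2 = (x 0 - y 0) ^ 2 + (x 1 - y 1) ^ 2 := by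
  rw [← dist_eq_norm, EuclideanSpace.dist_eq, Real.sq_sqrt (by positivity)]
  simp [Fin.sum_univ_two, Real.dist_eq, sq_abs]
lemma cont_apply0 : Continuous fun x : E2 => x 0 := (EuclideanSpace.proj (0 : Fin 2)).continuous
lemma cont_apply1 : Continuous fun x : E2 => x 1 := (EuclideanSpace.proj (1 : Fin 2)).continuous

section geom
variable (z₁ z₂ : E2) (d : ℝ)

/-- tangential coordinate -/
noncomputable def tc (x : E2) : ℝ :=
  ((x 0 - z₁ 0) * (z₂ 0 - z₁ 0) + (x 1 - z₁ 1) * (z₂ 1 - z₁ 1)) / d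
/-- normal coordinate -/
noncomputable def sc (x : E2) : ℝ :=
  ((x 1 - z₁ 1) * (z₂ 0 - z₁ 0) - (x 0 - z₁ 0) * (z₂ 1 - z₁ 1)) / d
/-- point with given coordinates -/
noncomputable def psi (p : ℝ × ℝ) : E2 :=
  mk2 (z₁ 0 + (p.1 * (z₂ 0 - z₁ 0) - p.2 * (z₂ 1 - z₁ 1)) / d)
      (z₁ 1 + (p.1 * (z₂ 1 - z₁ 1) + p.2 * (z₂ 0 - z₁ 0)) / d)

lemma cont_sc : Continuous (sc z₁ z₂ d) := by
  unfold sc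
  exact (((cont_apply1.sub continuous_const).mul continuous_const).sub
    ((cont_apply0.sub continuous_const).mul continuous_const)).div_const _

lemma cont_psi : Continuous (psi z₁ z₂ d) := by
  unfold psi mk2
  refine (PiLp.continuous_toLp (p := 2) (β := fun _ : Fin 2 => ℝ)).comp ?_
  refine continuous_pi fun i => ?_
  fin_cases i <;> simp <;> fun_prop

variable {z₁ z₂ d}
variable (hd : d ≠ 0) (hv : (z₂ 0 - z₁ 0) ^ 2 + (z₂ 1 - z₁ 1) ^ 2 = d ^ 2)
include hd

lemma tc_mul (x : E2) :
    tc z₁ z₂ d x * d = (x 0 - z₁ 0) * (z₂ 0 - z₁ 0) + (x 1 - z₁ 1) * (z₂ 1 - z₁ 1) := by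
  unfold tc; field_simp

lemma sc_mul (x : E2) :
    sc z₁ z₂ d x * d = (x 1 - z₁ 1) * (z₂ 0 - z₁ 0) - (x 0 - z₁ 0) * (z₂ 1 - z₁ 1) := by
  unfold sc; field_simp

include hv

lemma G1 (x : E2) : ‖x - z₁‖ ^ 2 = tc z₁ z₂ d x ^ 2 + sc z₁ z₂ d x ^ 2 := by
  have hd2 : d ^ 2 ≠ 0 := pow_ne_zero _ hd
  have hh : (tc z₁ z₂ d x ^ 2 + sc z₁ z₂ d x ^ 2) * d ^ 2
      = ((x 0 - z₁ 0) ^ 2 + (x 1 - z₁ 1) ^ 2) * d ^ 2 := by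
    calc (tc z₁ z₂ d x ^ 2 + sc z₁ z₂ d x ^ 2) * d ^ 2
        = (tc z₁ z₂ d x * d) ^ 2 + (sc z₁ z₂ d x * d) ^ 2 := by ring
      _ = ((x 0 - z₁ 0) * (z₂ 0 - z₁ 0) + (x 1 - z₁ 1) * (z₂ 1 - z₁ 1)) ^ 2
          + ((x 1 - z₁ 1) * (z₂ 0 - z₁ 0) - (x 0 - z₁ 0) * (z₂ 1 - z₁ 1)) ^ 2 := by
          rw [tc_mul hd, sc_mul hd]
      _ = ((x 0 - z₁ 0) ^ 2 + (x 1 - z₁ 1) ^ 2) * ((z₂ 0 - z₁ 0) ^ 2 + (z₂ 1 - z₁ 1) ^ 2) := by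
          ring
      _ = ((x 0 - z₁ 0) ^ 2 + (x 1 - z₁ 1) ^ 2) * d ^ 2 := by rw [hv]
  rw [normsq]; exact (mul_right_cancel₀ hd2 hh).symm

lemma G2 (x : E2) : ‖x - z₂‖ ^ 2 = (tc z₁ z₂ d x - d) ^ 2 + sc z₁ z₂ d x ^ 2 := by
  have h1 := tc_mul hd (z₁ := z₁) (z₂ := z₂) x
  have h2 := G1 hd hv x
  rw [normsq] at h2 ⊢
  nlinarith [h2, h1, hv]

lemma G3 (x y : E2) : dist x y ^ 2
    = (tc z₁ z₂ d x - tc z₁ z₂ d y) ^ 2 + (sc z₁ z₂ d x - sc z₁ z₂ d y) ^ 2 := by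
  have hd2 : d ^ 2 ≠ 0 := pow_ne_zero _ hd
  have hh : ((tc z₁ z₂ d x - tc z₁ z₂ d y) ^ 2 + (sc z₁ z₂ d x - sc z₁ z₂ d y) ^ 2) * d ^ 2
      = ((x 0 - y 0) ^ 2 + (x 1 - y 1) ^ 2) * d ^ 2 := by
    have e1 := tc_mul hd (z₁ := z₁) (z₂ := z₂) x
    have e2 := tc_mul hd (z₁ := z₁) (z₂ := z₂) y
    have e3 := sc_mul hd (z₁ := z₁) (z₂ := z₂) x
    have e4 := sc_mul hd (z₁ := z₁) (z₂ := z₂) y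
    calc ((tc z₁ z₂ d x - tc z₁ z₂ d y) ^ 2 + (sc z₁ z₂ d x - sc z₁ z₂ d y) ^ 2) * d ^ 2
        = (tc z₁ z₂ d x * d - tc z₁ z₂ d y * d) ^ 2
          + (sc z₁ z₂ d x * d - sc z₁ z₂ d y * d) ^ 2 := by ring
      _ = ((x 0 - y 0) * (z₂ 0 - z₁ 0) + (x 1 - y 1) * (z₂ 1 - z₁ 1)) ^ 2
          + ((x 1 - y 1) * (z₂ 0 - z₁ 0) - (x 0 - y 0) * (z₂ 1 - z₁ 1)) ^ 2 := by
          rw [e1, e2, e3, e4]; ring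
      _ = ((x 0 - y 0) ^ 2 + (x 1 - y 1) ^ 2) * ((z₂ 0 - z₁ 0) ^ 2 + (z₂ 1 - z₁ 1) ^ 2) := by ring
      _ = ((x 0 - y 0) ^ 2 + (x 1 - y 1) ^ 2) * d ^ 2 := by rw [hv]
  rw [dist_eq_norm, normsq]; exact (mul_right_cancel₀ hd2 hh).symm

lemma G4t (p : ℝ × ℝ) : tc z₁ z₂ d (psi z₁ z₂ d p) = p.1 := by
  unfold tc psi
  simp only [mk2_zero, mk2_one]
  field_simp
  linear_combination p.1 * hv

lemma G4s (p : ℝ × ℝ) : sc z₁ z₂ d (psi z₁ z₂ d p) = p.2 := by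
  unfold sc psi
  simp only [mk2_zero, mk2_one]
  field_simp
  linear_combination p.2 * hv

lemma G5 (x : E2) : psi z₁ z₂ d (tc z₁ z₂ d x, sc z₁ z₂ d x) = x := by
  refine ext2 ?_ ?_
  · unfold psi tc sc; simp only [mk2_zero]; field_simp; linear_combination (x 0 - z₁ 0) * hv
  · unfold psi tc sc; simp only [mk2_one]; field_simp; linear_combination (x 1 - z₁ 1) * hv

/-- the tangential identity -/
lemma G6 (x : E2) : 2 * tc z₁ z₂ d x * d = ‖x - z₁‖ ^ 2 - ‖x - z₂‖ ^ 2 + d ^ 2 := by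
  have g1 := G1 hd hv x
  have g2 := G2 hd hv x
  linear_combination g2 - g1

end geom

/-! ### real-arithmetic helper lemmas -/

lemma annulus_bounds (z : E2) (r w : ℝ) (hw0 : 0 ≤ r - w) (p : E2)
    (hp : p ∈ closedBall z r \ closedBall z (r - w)) :
    (r - w) ^ 2 < ‖p - z‖ ^ 2 ∧ ‖p - z‖ ^ 2 ≤ r ^ 2 := by
  obtain ⟨h1, h2⟩ := hp
  rw [mem_closedBall, dist_eq_norm] at h1
  rw [mem_closedBall, dist_eq_norm, not_le] at h2
  have n1 : (0:ℝ) ≤ ‖p - z‖ := norm_nonneg _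
  exact ⟨by nlinarith, by nlinarith⟩

lemma lam_bound (r w X : ℝ) (hw : 0 < w) (hwX : w ≤ X ^ 30) (hrX : r ≤ X) (hr0 : 0 < r)
    (hX0 : 0 < X) : r ^ 2 - (r - w) ^ 2 ≤ 2 * X ^ 31 := by
  have h1 : r ^ 2 - (r - w) ^ 2 ≤ 2 * r * w := by nlinarith
  have h2 : 2 * r * w ≤ 2 * X * X ^ 30 := by nlinarith [pow_pos hX0 30]
  calc r ^ 2 - (r - w) ^ 2 ≤ 2 * r * w := h1
    _ ≤ 2 * X * X ^ 30 := h2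
    _ = 2 * X ^ 31 := by ring

lemma tdiff_bound (tp tq dd X q1p q1q q2p q2q A1 B1 A2 B2 : ℝ)
    (e : 2 * (tp - tq) * dd = (q1p - q1q) - (q2p - q2q))
    (h1p : A1 < q1p) (h1p' : q1p ≤ B1) (h1q : A1 < q1q) (h1q' : q1q ≤ B1)
    (h2p : A2 < q2p) (h2p' : q2p ≤ B2) (h2q : A2 < q2q) (h2q' : q2q ≤ B2)
    (hΛ1 : B1 - A1 ≤ 2 * X ^ 31) (hΛ2 : B2 - A2 ≤ 2 * X ^ 31)
    (hd5 : X ^ 5 ≤ dd) (hX0 : 0 < X) : |tp - tq| ≤ 2 * X ^ 26 := by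
  have hX5 : (0:ℝ) < X ^ 5 := pow_pos hX0 5
  have hd0 : (0:ℝ) < dd := lt_of_lt_of_le hX5 hd5
  have habs : |tp - tq| * (2 * dd) ≤ 4 * X ^ 31 := by
    have h5 : |tp - tq| * (2 * dd) = |2 * (tp - tq) * dd| := by
      rw [abs_mul, abs_mul, abs_two, abs_of_pos hd0]; ring
    rw [h5, e, abs_le]
    constructor <;> nlinarith
  have hmul : |tp - tq| * (2 * X ^ 5) ≤ |tp - tq| * (2 * dd) :=
    mul_le_mul_of_nonneg_left (by linarith) (abs_nonneg _)
  have h31 : (4:ℝ) * X ^ 31 = (2 * X ^ 26) * (2 * X ^ 5) := by ring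
  have := le_trans hmul habs
  rw [h31] at this
  exact le_of_mul_le_mul_right this (by positivity)

lemma tb_bound (t s q1 r X : ℝ) (hg : q1 = t ^ 2 + s ^ 2) (hq : q1 ≤ r ^ 2) (hr : r ≤ X)
    (hr0 : 0 ≤ r) : |t| ≤ X := by
  have : t ^ 2 ≤ X ^ 2 := by nlinarith [sq_nonneg s]
  rw [abs_le]; constructor <;> nlinarith

lemma sdiff_sq_bound (tp tq sp sq q1p q1q A1 B1 X : ℝ)
    (g1p : q1p = tp ^ 2 + sp ^ 2) (g1q : q1q = tq ^ 2 + sq ^ 2)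
    (h1p : A1 < q1p) (h1p' : q1p ≤ B1) (h1q : A1 < q1q) (h1q' : q1q ≤ B1)
    (hΛ1 : B1 - A1 ≤ 2 * X ^ 31)
    (htpq : |tp - tq| ≤ 2 * X ^ 26) (htp : |tp| ≤ X) (htq : |tq| ≤ X)
    (hX0 : 0 < X) (hXle : X ≤ 1 / 2) :
    |sp ^ 2 - sq ^ 2| ≤ 5 * X ^ 27 := by
  have e1 : |tp ^ 2 - tq ^ 2| ≤ 4 * X ^ 27 := by
    have h : |tp ^ 2 - tq ^ 2| = |tp - tq| * |tp + tq| := by rw [← abs_mul]; ring_nf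
    rw [h]
    have h2' : |tp + tq| ≤ 2 * X := by
      calc |tp + tq| ≤ |tp| + |tq| := abs_add_le _ _
        _ ≤ 2 * X := by linarith
    calc |tp - tq| * |tp + tq| ≤ (2 * X ^ 26) * (2 * X) :=
          mul_le_mul htpq h2' (abs_nonneg _) (by positivity)
      _ = 4 * X ^ 27 := by ring
  have e2 : |q1p - q1q| ≤ 2 * X ^ 31 := by rw [abs_le]; constructor <;> linarith
  have hX431 : 2 * X ^ 31 ≤ X ^ 27 := by
    have h4 : X ^ 4 ≤ (1/2:ℝ) ^ 4 := pow_le_pow_left₀ hX0.le hXle 4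
    nlinarith [pow_pos hX0 27, pow_pos hX0 4]
  have h : sp ^ 2 - sq ^ 2 = (q1p - q1q) - (tp ^ 2 - tq ^ 2) := by linarith
  rw [h]
  calc |(q1p - q1q) - (tp ^ 2 - tq ^ 2)| ≤ |q1p - q1q| + |tp ^ 2 - tq ^ 2| := abs_sub _ _
    _ ≤ 2 * X ^ 31 + 4 * X ^ 27 := by linarith
    _ ≤ 5 * X ^ 27 := by linarith

/-- Elementary step: two numbers above `√L` with squares within `L` are within `2√(2L)`. -/
lemma realstep (a b L : ℝ) (hL : 0 < L) (ha : Real.sqrt L < a) (hb : Real.sqrt L < b)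
    (hab : |a ^ 2 - b ^ 2| ≤ L) : |a - b| ≤ 2 * Real.sqrt (2 * L) := by
  have hsL : 0 < Real.sqrt L := Real.sqrt_pos.2 hL
  have ha0 : 0 < a := lt_trans hsL ha
  have hb0 : 0 < b := lt_trans hsL hb
  have key : |a - b| * (a + b) = |a ^ 2 - b ^ 2| := by
    rw [← abs_of_pos (show (0:ℝ) < a + b by linarith), ← abs_mul]
    ring_nf
  have h1 : |a - b| * (2 * Real.sqrt L) ≤ L := by
    have h : |a - b| * (2 * Real.sqrt L) ≤ |a - b| * (a + b) :=
      mul_le_mul_of_nonneg_left (by linarith) (abs_nonneg _)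
    calc |a - b| * (2 * Real.sqrt L) ≤ |a - b| * (a + b) := h
      _ = |a ^ 2 - b ^ 2| := key
      _ ≤ L := hab
  have hLs : L = Real.sqrt L * Real.sqrt L := (Real.mul_self_sqrt hL.le).symm
  have h2 : |a - b| ≤ Real.sqrt L / 2 := by nlinarith [abs_nonneg (a - b)]
  have h3 : Real.sqrt L ≤ Real.sqrt (2 * L) := Real.sqrt_le_sqrt (by linarith)
  have h4 : 0 ≤ Real.sqrt (2 * L) := Real.sqrt_nonneg _
  linarith

lemma dist_final (dp a s Y L : ℝ) (hdp : 0 ≤ dp) (hY : 0 < Y)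
    (h : dp ^ 2 = a ^ 2 + s ^ 2) (ha : |a| ≤ Y) (hs : |s| ≤ 2 * Real.sqrt (2 * L))
    (hL : 0 ≤ L) (hLY : L ≤ 6 * Y ^ 2) : dp ≤ 7 * Y := by
  have h1 : s ^ 2 ≤ 8 * L := by
    have e : (2 * Real.sqrt (2 * L)) ^ 2 = 8 * L := by
      rw [mul_pow, Real.sq_sqrt (by linarith)]; ring
    nlinarith [abs_nonneg s, sq_abs s]
  have h2 : a ^ 2 ≤ Y ^ 2 := by nlinarith [abs_nonneg a, sq_abs a]
  have h3 : dp ^ 2 ≤ 49 * Y ^ 2 := by nlinarith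
  nlinarith

lemma cvx_lt (A x y a b : ℝ) (hx : A < x) (hy : A < y) (ha : 0 ≤ a) (hb : 0 ≤ b)
    (hab : a + b = 1) : A < a * x + b * y := by
  rcases ha.lt_or_eq with ha' | ha'
  · have h1 : a * A < a * x := mul_lt_mul_of_pos_left hx ha'
    have h2 : b * A ≤ b * y := mul_le_mul_of_nonneg_left hy.le hb
    have h3 : a * A + b * A = A := by rw [← add_mul, hab, one_mul]
    linarith
  · have hb1 : b = 1 := by linarith
    rw [← ha', hb1]; simpa using hy

lemma cvx_le (B x y a b : ℝ) (hx : x ≤ B) (hy : y ≤ B) (ha : 0 ≤ a) (hb : 0 ≤ b)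
    (hab : a + b = 1) : a * x + b * y ≤ B := by
  have h1 : a * x ≤ a * B := mul_le_mul_of_nonneg_left hx ha
  have h2 : b * y ≤ b * B := mul_le_mul_of_nonneg_left hy hb
  have h3 : a * B + b * B = B := by rw [← add_mul, hab, one_mul]
  linarith

/-! ### the parametrization of the two halves of the intersection -/

noncomputable def tau (dd : ℝ) (q : ℝ × ℝ) : ℝ := (q.1 - q.2 + dd ^ 2) / (2 * dd)
noncomputable def sig (dd : ℝ) (q : ℝ × ℝ) : ℝ := Real.sqrt (q.1 - tau dd q ^ 2)
noncomputable def phi (z₁ z₂ : E2) (dd ε : ℝ) (q : ℝ × ℝ) : E2 :=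
  psi z₁ z₂ dd (tau dd q, ε * sig dd q)
def Kset (A1 B1 A2 B2 dd : ℝ) : Set (ℝ × ℝ) :=
  {q | A1 < q.1 ∧ q.1 ≤ B1 ∧ A2 < q.2 ∧ q.2 ≤ B2 ∧ (q.1 - q.2 + dd ^ 2) ^ 2 ≤ 4 * dd ^ 2 * q.1}

lemma cont_phi (z₁ z₂ : E2) (dd ε : ℝ) : Continuous (phi z₁ z₂ dd ε) := by
  unfold phi sig tau
  apply (cont_psi z₁ z₂ dd).comp
  apply Continuous.prodMk
  · fun_prop
  · apply Continuous.mul continuous_const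
    apply Real.continuous_sqrt.comp
    fun_prop

lemma Kconvex (A1 B1 A2 B2 dd : ℝ) : Convex ℝ (Kset A1 B1 A2 B2 dd) := by
  rintro ⟨x1, x2⟩ ⟨h1, h2, h3, h4, h5⟩ ⟨y1, y2⟩ ⟨g1, g2, g3, g4, g5⟩ a b ha hb hab
  refine ⟨?_, ?_, ?_, ?_, ?_⟩
  · exact cvx_lt _ _ _ _ _ h1 g1 ha hb hab
  · exact cvx_le _ _ _ _ _ h2 g2 ha hb hab
  · exact cvx_lt _ _ _ _ _ h3 g3 ha hb hab
  · exact cvx_le _ _ _ _ _ h4 g4 ha hb hab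
  · show (a * x1 + b * y1 - (a * x2 + b * y2) + dd ^ 2) ^ 2
        ≤ 4 * dd ^ 2 * (a * x1 + b * y1)
    simp only at h5 g5
    have hA : a * x1 + b * y1 - (a * x2 + b * y2) + dd ^ 2
        = a * (x1 - x2 + dd ^ 2) + b * (y1 - y2 + dd ^ 2) := by
      linear_combination (-(dd ^ 2)) * hab
    rw [hA]
    have expand : a * (x1 - x2 + dd ^ 2) ^ 2 + b * (y1 - y2 + dd ^ 2) ^ 2
        - (a * (x1 - x2 + dd ^ 2) + b * (y1 - y2 + dd ^ 2)) ^ 2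
        = a * b * ((x1 - x2 + dd ^ 2) - (y1 - y2 + dd ^ 2)) ^ 2 := by
      linear_combination (-(a * (x1 - x2 + dd ^ 2) ^ 2 + b * (y1 - y2 + dd ^ 2) ^ 2)) * hab
    have hnn : 0 ≤ a * b * ((x1 - x2 + dd ^ 2) - (y1 - y2 + dd ^ 2)) ^ 2 :=
      mul_nonneg (mul_nonneg ha hb) (sq_nonneg _)
    have m1 := mul_le_mul_of_nonneg_left h5 ha
    have m2 := mul_le_mul_of_nonneg_left g5 hb
    nlinarith [m1, m2]

lemma tau_mul (dd : ℝ) (hd : dd ≠ 0) (q1 q2 : ℝ) :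
    2 * tau dd (q1, q2) * dd = q1 - q2 + dd ^ 2 := by
  unfold tau; field_simp

lemma tau_sq_le (dd q1 q2 : ℝ) (hd : dd ≠ 0)
    (h5 : (q1 - q2 + dd ^ 2) ^ 2 ≤ 4 * dd ^ 2 * q1) : tau dd (q1, q2) ^ 2 ≤ q1 := by
  have hdd : (0:ℝ) < dd ^ 2 := by positivity
  have htm := tau_mul dd hd q1 q2
  have e : (2 * tau dd (q1, q2) * dd) ^ 2 = (q1 - q2 + dd ^ 2) ^ 2 := by rw [htm]
  nlinarith [e, h5, hdd]

lemma le_ball_of_sq (u r c : ℝ) (hu : 0 ≤ u) (hr : 0 ≤ r) (h : u ^ 2 = c) (hc : c ≤ r ^ 2) :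
    u ≤ r := by nlinarith

lemma lt_of_sq (u v c : ℝ) (hu : 0 ≤ u) (hv : 0 ≤ v) (h : u ^ 2 = c) (hc : v ^ 2 < c) :
    v < u := by nlinarith

section phiprop
variable {z₁ z₂ : E2} {d : ℝ}
variable (hd : d ≠ 0) (hv : (z₂ 0 - z₁ 0) ^ 2 + (z₂ 1 - z₁ 1) ^ 2 = d ^ 2)
include hd hv

lemma phi_mem (r1 w1 r2 w2 ε : ℝ) (hε : ε ^ 2 = 1) (hw1 : 0 ≤ r1 - w1) (hw2 : 0 ≤ r2 - w2)
    (hr10 : 0 ≤ r1) (hr20 : 0 ≤ r2) (q1 q2 : ℝ)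
    (h1 : (r1 - w1) ^ 2 < q1) (h2 : q1 ≤ r1 ^ 2) (h3 : (r2 - w2) ^ 2 < q2) (h4 : q2 ≤ r2 ^ 2)
    (h5 : (q1 - q2 + d ^ 2) ^ 2 ≤ 4 * d ^ 2 * q1) :
    phi z₁ z₂ d ε (q1, q2) ∈ (closedBall z₁ r1 \ closedBall z₁ (r1 - w1))
      ∩ (closedBall z₂ r2 \ closedBall z₂ (r2 - w2)) := by
  have ht5 : tau d (q1, q2) ^ 2 ≤ q1 := tau_sq_le d q1 q2 hd h5
  have e_t : tc z₁ z₂ d (phi z₁ z₂ d ε (q1, q2)) = tau d (q1, q2) := by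
    unfold phi; rw [G4t hd hv]
  have e_s : sc z₁ z₂ d (phi z₁ z₂ d ε (q1, q2)) = ε * sig d (q1, q2) := by
    unfold phi; rw [G4s hd hv]
  have hsig : sig d (q1, q2) ^ 2 = q1 - tau d (q1, q2) ^ 2 := by
    unfold sig; rw [Real.sq_sqrt (by simpa using sub_nonneg.2 ht5)]
  have hnorm1 : ‖phi z₁ z₂ d ε (q1, q2) - z₁‖ ^ 2 = q1 := by
    rw [G1 hd hv, e_t, e_s, mul_pow, hε, one_mul, hsig]; ring
  have htm := tau_mul d hd q1 q2
  have hnorm2 : ‖phi z₁ z₂ d ε (q1, q2) - z₂‖ ^ 2 = q2 := by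
    rw [G2 hd hv, e_t, e_s, mul_pow, hε, one_mul, hsig]
    linear_combination (-1 : ℝ) * htm
  have n1 : (0:ℝ) ≤ ‖phi z₁ z₂ d ε (q1, q2) - z₁‖ := norm_nonneg _
  have n2 : (0:ℝ) ≤ ‖phi z₁ z₂ d ε (q1, q2) - z₂‖ := norm_nonneg _
  refine ⟨⟨?_, ?_⟩, ?_, ?_⟩
  · rw [mem_closedBall, dist_eq_norm]
    exact le_ball_of_sq _ _ _ n1 hr10 hnorm1 h2
  · rw [mem_closedBall, dist_eq_norm, not_le]
    exact lt_of_sq _ _ _ n1 hw1 hnorm1 h1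
  · rw [mem_closedBall, dist_eq_norm]
    exact le_ball_of_sq _ _ _ n2 hr20 hnorm2 h4
  · rw [mem_closedBall, dist_eq_norm, not_le]
    exact lt_of_sq _ _ _ n2 hw2 hnorm2 h3

lemma phi_surj (r1 w1 r2 w2 ε : ℝ) (hε : ε = 1 ∨ ε = -1)
    (hw1 : 0 ≤ r1 - w1) (hw2 : 0 ≤ r2 - w2) (x : E2)
    (hx : x ∈ (closedBall z₁ r1 \ closedBall z₁ (r1 - w1))
      ∩ (closedBall z₂ r2 \ closedBall z₂ (r2 - w2)))
    (hsign : 0 ≤ ε * sc z₁ z₂ d x) :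
    x ∈ phi z₁ z₂ d ε '' (Kset ((r1 - w1) ^ 2) (r1 ^ 2) ((r2 - w2) ^ 2) (r2 ^ 2) d) := by
  obtain ⟨b1, b2⟩ := annulus_bounds z₁ r1 w1 hw1 x hx.1
  obtain ⟨b3, b4⟩ := annulus_bounds z₂ r2 w2 hw2 x hx.2
  have g1 := G1 hd hv x
  have g6 := G6 hd hv x
  have key : (‖x - z₁‖ ^ 2 - ‖x - z₂‖ ^ 2 + d ^ 2) ^ 2 ≤ 4 * d ^ 2 * ‖x - z₁‖ ^ 2 := by
    have he : ‖x - z₁‖ ^ 2 - ‖x - z₂‖ ^ 2 + d ^ 2 = 2 * tc z₁ z₂ d x * d := by linarith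
    rw [he]
    nlinarith [mul_nonneg (sq_nonneg d) (sq_nonneg (sc z₁ z₂ d x)), g1, sq_nonneg d]
  have hKmem : ((‖x - z₁‖ ^ 2, ‖x - z₂‖ ^ 2) : ℝ × ℝ)
      ∈ Kset ((r1 - w1) ^ 2) (r1 ^ 2) ((r2 - w2) ^ 2) (r2 ^ 2) d :=
    ⟨b1, b2, b3, b4, key⟩
  refine ⟨(‖x - z₁‖ ^ 2, ‖x - z₂‖ ^ 2), hKmem, ?_⟩
  have htm := tau_mul d hd (‖x - z₁‖ ^ 2) (‖x - z₂‖ ^ 2)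
  have htau : tau d (‖x - z₁‖ ^ 2, ‖x - z₂‖ ^ 2) = tc z₁ z₂ d x := by
    have h2d : (2 : ℝ) * d ≠ 0 := mul_ne_zero two_ne_zero hd
    have h : tau d (‖x - z₁‖ ^ 2, ‖x - z₂‖ ^ 2) * (2 * d) = tc z₁ z₂ d x * (2 * d) := by
      linarith
    exact mul_right_cancel₀ h2d h
  have hsig : sig d (‖x - z₁‖ ^ 2, ‖x - z₂‖ ^ 2) = |sc z₁ z₂ d x| := by
    unfold sig
    rw [htau]
    have h : (‖x - z₁‖ ^ 2, ‖x - z₂‖ ^ 2).1 - tc z₁ z₂ d x ^ 2 = sc z₁ z₂ d x ^ 2 := by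
      simp only; linarith
    rw [h, Real.sqrt_sq_eq_abs]
  unfold phi
  rw [htau, hsig]
  have habs : ε * |sc z₁ z₂ d x| = sc z₁ z₂ d x := by
    rcases hε with rfl | rfl
    · simp only [one_mul] at hsign ⊢; exact abs_of_nonneg hsign
    · have h : sc z₁ z₂ d x ≤ 0 := by linarith
      rw [abs_of_nonpos h]; ring
  rw [habs]
  exact G5 hd hv x

end phiprop

lemma TY_bound (X Y : ℝ) (hX0 : 0 < X) (hXle : X ≤ 1/2) (hY0 : 0 < Y) (hY2 : Y ^ 2 = X ^ 27) :
    2 * X ^ 26 ≤ Y := by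
  have h25 : X ^ 25 ≤ (1/2 : ℝ) ^ 25 := pow_le_pow_left₀ hX0.le hXle 25
  have h : (2 * X ^ 26) ^ 2 ≤ Y ^ 2 := by
    rw [hY2]
    have e : (2 * X ^ 26) ^ 2 = 4 * X ^ 25 * X ^ 27 := by ring
    nlinarith [pow_pos hX0 27, pow_pos hX0 25]
  nlinarith [pow_pos hX0 26]

lemma LY_bound (X Y : ℝ) (hX0 : 0 < X) (hY2 : Y ^ 2 = X ^ 27) : 5 * X ^ 27 ≤ 6 * Y ^ 2 := by
  rw [hY2]; nlinarith [pow_pos hX0 27]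


/-- The annulus `A(z,r,30) = B(z,r) \ B(z, r - r^30)` in the Euclidean plane. -/
noncomputable def ann30 (z : EuclideanSpace ℝ (Fin 2)) (r : ℝ) :
    Set (EuclideanSpace ℝ (Fin 2)) :=
  closedBall z r \ closedBall z (r - r ^ (30 : ℕ))

/-- Intersection of two thin Euclidean annuli with comparable radii and centers
at distance between `2^{-5n}` and `2^{-n}/30` consists of at most two connected
components, each of diameter less than `24 · 2^{-13.5 n}`. -/
theorem stmt7 :
    ∃ N : ℕ, ∀ n : ℕ, N ≤ n → ∀ (r₁ r₂ : ℝ) (z₁ z₂ : EuclideanSpace ℝ (Fin 2)),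
      (2 : ℝ) ^ (-(n : ℝ) - 1) ≤ r₁ → r₁ ≤ (2 : ℝ) ^ (-(n : ℝ)) →
      (2 : ℝ) ^ (-(n : ℝ) - 1) ≤ r₂ → r₂ ≤ (2 : ℝ) ^ (-(n : ℝ)) →
      (2 : ℝ) ^ (-5 * (n : ℝ)) ≤ ‖z₁ - z₂‖ → ‖z₁ - z₂‖ ≤ (2 : ℝ) ^ (-(n : ℝ)) / 30 →
      ({C : Set (EuclideanSpace ℝ (Fin 2)) |
          ∃ x ∈ ann30 z₁ r₁ ∩ ann30 z₂ r₂,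
            C = connectedComponentIn (ann30 z₁ r₁ ∩ ann30 z₂ r₂) x}.ncard ≤ 2 ∧
        ∀ x ∈ ann30 z₁ r₁ ∩ ann30 z₂ r₂,
          Metric.diam (connectedComponentIn (ann30 z₁ r₁ ∩ ann30 z₂ r₂) x) <
            24 * (2 : ℝ) ^ (-(13.5 : ℝ) * (n : ℝ))) := by
  refine ⟨1, fun n hn r₁ r₂ z₁ z₂ hr₁l hr₁u hr₂l hr₂u hdl hdu => ?_⟩
  clear hdu
  set S : Set (EuclideanSpace ℝ (Fin 2)) := ann30 z₁ r₁ ∩ ann30 z₂ r₂ with hSdef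
  set X : ℝ := (2 : ℝ) ^ (-(n : ℝ)) with hXdef
  have hX0 : 0 < X := Real.rpow_pos_of_pos (by norm_num) _
  have hXle : X ≤ 1 / 2 := by
    rw [hXdef]
    calc (2:ℝ) ^ (-(n:ℝ)) ≤ (2:ℝ) ^ (-(1:ℝ)) := by
          apply Real.rpow_le_rpow_of_exponent_le (by norm_num)
          have : (1:ℝ) ≤ (n:ℝ) := by exact_mod_cast hn
          linarith
      _ = 1 / 2 := by rw [Real.rpow_neg_one]; norm_num
  have hXpow : ∀ k : ℕ, X ^ k = (2:ℝ) ^ ((-(n:ℝ)) * (k:ℝ)) := fun k => by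
    rw [hXdef, ← Real.rpow_natCast ((2:ℝ) ^ (-(n:ℝ))) k,
      ← Real.rpow_mul (by norm_num : (0:ℝ) ≤ 2)]
  set d : ℝ := ‖z₁ - z₂‖ with hddef
  have hd5 : X ^ 5 ≤ d := by
    rw [hXpow 5, show (-(n:ℝ)) * ((5:ℕ):ℝ) = -5 * (n:ℝ) by push_cast; ring]
    exact hdl
  have hd0 : 0 < d := lt_of_lt_of_le (pow_pos hX0 5) hd5
  have hdne : d ≠ 0 := ne_of_gt hd0
  have hv : (z₂ 0 - z₁ 0) ^ 2 + (z₂ 1 - z₁ 1) ^ 2 = d ^ 2 := by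
    have h := normsq z₁ z₂
    rw [hddef, h]; ring
  have hhalf : (2:ℝ) ^ (-(n:ℝ) - 1) = X / 2 := by
    rw [hXdef, Real.rpow_sub (by norm_num), Real.rpow_one]
  have hr₁l' : X / 2 ≤ r₁ := hhalf ▸ hr₁l
  have hr₂l' : X / 2 ≤ r₂ := hhalf ▸ hr₂l
  have hY0 : (0:ℝ) < (2 : ℝ) ^ (-(13.5:ℝ) * (n : ℝ)) := Real.rpow_pos_of_pos (by norm_num) _
  have hY2 : ((2 : ℝ) ^ (-(13.5:ℝ) * (n : ℝ))) ^ 2 = X ^ 27 := by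
    rw [hXpow 27, ← Real.rpow_natCast ((2:ℝ) ^ (-(13.5:ℝ) * (n:ℝ))) 2,
      ← Real.rpow_mul (by norm_num : (0:ℝ) ≤ 2)]
    norm_num
    congr 1; ring
  clear_value X d
  clear hdl hr₁l hr₂l hXdef hddef hhalf
  have hr₁0 : 0 < r₁ := lt_of_lt_of_le (by positivity) hr₁l'
  have hr₂0 : 0 < r₂ := lt_of_lt_of_le (by positivity) hr₂l'
  set w₁ : ℝ := r₁ ^ (30:ℕ) with hw1def
  set w₂ : ℝ := r₂ ^ (30:ℕ) with hw2def
  have hw₁pos : 0 < w₁ := by rw [hw1def]; positivity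
  have hw₂pos : 0 < w₂ := by rw [hw2def]; positivity
  have hw₁ : w₁ ≤ X ^ 30 := pow_le_pow_left₀ hr₁0.le hr₁u 30
  have hw₂ : w₂ ≤ X ^ 30 := pow_le_pow_left₀ hr₂0.le hr₂u 30
  clear_value w₁ w₂
  have hX30 : X ^ 30 ≤ X / 4 := by
    have h29 : X ^ 29 ≤ (1/2 : ℝ) ^ 29 := pow_le_pow_left₀ hX0.le hXle 29
    have h : (1/2 : ℝ) ^ 29 ≤ 1/4 := by norm_num
    calc X ^ 30 = X * X ^ 29 := by ring
      _ ≤ X * (1/4) := by nlinarith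
      _ = X / 4 := by ring
  have hw₁' : X / 4 ≤ r₁ - w₁ := by linarith
  have hw₂' : X / 4 ≤ r₂ - w₂ := by linarith
  have hw₁0 : 0 ≤ r₁ - w₁ := le_trans (by positivity) hw₁'
  have hw₂0 : 0 ≤ r₂ - w₂ := le_trans (by positivity) hw₂'
  have hSeq : S = (closedBall z₁ r₁ \ closedBall z₁ (r₁ - w₁))
      ∩ (closedBall z₂ r₂ \ closedBall z₂ (r₂ - w₂)) := by
    rw [hSdef, hw1def, hw2def]; rfl
  -- membership bounds
  have hmem : ∀ p ∈ S,
      ((r₁ - w₁) ^ 2 < ‖p - z₁‖ ^ 2 ∧ ‖p - z₁‖ ^ 2 ≤ r₁ ^ 2) ∧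
      ((r₂ - w₂) ^ 2 < ‖p - z₂‖ ^ 2 ∧ ‖p - z₂‖ ^ 2 ≤ r₂ ^ 2) := by
    intro p hp
    rw [hSeq] at hp
    exact ⟨annulus_bounds z₁ r₁ w₁ hw₁0 p hp.1, annulus_bounds z₂ r₂ w₂ hw₂0 p hp.2⟩
  -- interval-length bounds
  have hΛ₁ : r₁ ^ 2 - (r₁ - w₁) ^ 2 ≤ 2 * X ^ 31 := lam_bound r₁ w₁ X hw₁pos hw₁ hr₁u hr₁0 hX0
  have hΛ₂ : r₂ ^ 2 - (r₂ - w₂) ^ 2 ≤ 2 * X ^ 31 := lam_bound r₂ w₂ X hw₂pos hw₂ hr₂u hr₂0 hX0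
  -- (a) tangential spread over S
  have ht : ∀ p ∈ S, ∀ q ∈ S, |tc z₁ z₂ d p - tc z₁ z₂ d q| ≤ 2 * X ^ 26 := by
    intro p hp q hq
    obtain ⟨⟨hp1, hp2⟩, hp3, hp4⟩ := hmem p hp
    obtain ⟨⟨hq1, hq2⟩, hq3, hq4⟩ := hmem q hq
    refine tdiff_bound _ _ d X (‖p - z₁‖ ^ 2) (‖q - z₁‖ ^ 2) (‖p - z₂‖ ^ 2) (‖q - z₂‖ ^ 2)
      ((r₁ - w₁) ^ 2) (r₁ ^ 2) ((r₂ - w₂) ^ 2) (r₂ ^ 2) ?_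
      hp1 hp2 hq1 hq2 hp3 hp4 hq3 hq4 hΛ₁ hΛ₂ hd5 hX0
    have e1 := G6 hdne hv p
    have e2 := G6 hdne hv q
    linarith
  -- |t| ≤ X on S
  have htb : ∀ p ∈ S, |tc z₁ z₂ d p| ≤ X := by
    intro p hp
    obtain ⟨⟨_, hp2⟩, _, _⟩ := hmem p hp
    exact tb_bound _ (sc z₁ z₂ d p) _ r₁ X (G1 hdne hv p) hp2 hr₁u hr₁0.le
  -- (b) normal-square spread over S
  have hs2 : ∀ p ∈ S, ∀ q ∈ S,
      |sc z₁ z₂ d p ^ 2 - sc z₁ z₂ d q ^ 2| ≤ 5 * X ^ 27 := by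
    intro p hp q hq
    obtain ⟨⟨hp1, hp2⟩, _, _⟩ := hmem p hp
    obtain ⟨⟨hq1, hq2⟩, _, _⟩ := hmem q hq
    exact sdiff_sq_bound _ _ _ _ _ _ ((r₁ - w₁) ^ 2) (r₁ ^ 2) X
      (G1 hdne hv p) (G1 hdne hv q) hp1 hp2 hq1 hq2 hΛ₁
      (ht p hp q hq) (htb p hp) (htb q hq) hX0 hXle
  -- the two preconnected halves
  set KK : Set (ℝ × ℝ) := Kset ((r₁ - w₁) ^ 2) (r₁ ^ 2) ((r₂ - w₂) ^ 2) (r₂ ^ 2) d with hKdef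
  have hKsub : ∀ ε : ℝ, ε ^ 2 = 1 → phi z₁ z₂ d ε '' KK ⊆ S := by
    intro ε hε
    rintro _ ⟨⟨q1, q2⟩, hq, rfl⟩
    obtain ⟨h1, h2, h3, h4, h5⟩ := hq
    rw [hSeq]
    exact phi_mem hdne hv r₁ w₁ r₂ w₂ ε hε hw₁0 hw₂0 hr₁0.le hr₂0.le q1 q2 h1 h2 h3 h4 h5
  have hpre : ∀ ε : ℝ, IsPreconnected (phi z₁ z₂ d ε '' KK) := fun ε =>
    ((Kconvex _ _ _ _ _).isPreconnected).image _ (cont_phi z₁ z₂ d ε).continuousOn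
  have hcompeq : ∀ ε : ℝ, (ε = 1 ∨ ε = -1) → ∀ x ∈ S, ∀ y ∈ S,
      0 ≤ ε * sc z₁ z₂ d x → 0 ≤ ε * sc z₁ z₂ d y →
      connectedComponentIn S x = connectedComponentIn S y := by
    intro ε hε x hx y hy hsx hsy
    have hε2 : ε ^ 2 = 1 := by rcases hε with rfl | rfl <;> norm_num
    have hxm : x ∈ phi z₁ z₂ d ε '' KK :=
      phi_surj hdne hv r₁ w₁ r₂ w₂ ε hε hw₁0 hw₂0 x (by rw [← hSeq]; exact hx) hsx
    have hym : y ∈ phi z₁ z₂ d ε '' KK :=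
      phi_surj hdne hv r₁ w₁ r₂ w₂ ε hε hw₁0 hw₂0 y (by rw [← hSeq]; exact hy) hsy
    have hsubc := (hpre ε).subset_connectedComponentIn hxm (hKsub ε hε2)
    exact connectedComponentIn_eq (hsubc hym)
  constructor
  · -- at most two components
    by_cases hne : S.Nonempty
    · obtain ⟨x₀, hx₀⟩ := hne
      by_cases hP : ∃ a ∈ S, 0 ≤ sc z₁ z₂ d a
      · obtain ⟨a, ha, hsa⟩ := hP
        by_cases hN : ∃ b ∈ S, sc z₁ z₂ d b ≤ 0
        · obtain ⟨b, hb, hsb⟩ := hN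
          have hsub2 : {C | ∃ x ∈ S, C = connectedComponentIn S x}
              ⊆ {connectedComponentIn S a, connectedComponentIn S b} := by
            rintro C ⟨x, hx, rfl⟩
            simp only [Set.mem_insert_iff, Set.mem_singleton_iff]
            rcases le_total 0 (sc z₁ z₂ d x) with h | h
            · exact Or.inl (hcompeq 1 (Or.inl rfl) x hx a ha (by simpa using h)
                (by simpa using hsa))
            · exact Or.inr (hcompeq (-1) (Or.inr rfl) x hx b hb (by simpa using h)
                (by simpa using hsb))
          refine le_trans (Set.ncard_le_ncard hsub2 ((Set.finite_singleton _).insert _)) ?_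
          refine le_trans (Set.ncard_insert_le _ _) ?_
          simp
        · push_neg at hN
          have hsub1 : {C | ∃ x ∈ S, C = connectedComponentIn S x}
              ⊆ {connectedComponentIn S a} := by
            rintro C ⟨x, hx, rfl⟩
            simp only [Set.mem_singleton_iff]
            exact hcompeq 1 (Or.inl rfl) x hx a ha (by simpa using (hN x hx).le)
              (by simpa using hsa)
          refine le_trans (Set.ncard_le_ncard hsub1 (Set.finite_singleton _)) ?_
          simp
      · push_neg at hP
        have hsub1 : {C | ∃ x ∈ S, C = connectedComponentIn S x}
            ⊆ {connectedComponentIn S x₀} := by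
          rintro C ⟨x, hx, rfl⟩
          simp only [Set.mem_singleton_iff]
          refine hcompeq (-1) (Or.inr rfl) x hx x₀ hx₀ ?_ ?_
          · have := hP x hx; simp only [neg_one_mul]; linarith
          · have := hP x₀ hx₀; simp only [neg_one_mul]; linarith
        refine le_trans (Set.ncard_le_ncard hsub1 (Set.finite_singleton _)) ?_
        simp
    · have hT : {C | ∃ x ∈ S, C = connectedComponentIn S x} = ∅ := by
        ext C
        simp only [Set.mem_setOf_eq, Set.mem_empty_iff_false, iff_false, not_exists]
        intro x hx
        exact absurd ⟨x, hx.1⟩ hne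
      rw [hT]
      simp
  · -- small diameter of each component
    intro x hx
    have hCS : connectedComponentIn S x ⊆ S := connectedComponentIn_subset _ _
    have hCpre : IsPreconnected (connectedComponentIn S x) := isPreconnected_connectedComponentIn
    have hL0 : (0:ℝ) < 5 * X ^ 27 := by have := pow_pos hX0 27; linarith
    have hsdiff : ∀ p ∈ connectedComponentIn S x, ∀ q ∈ connectedComponentIn S x,
        |sc z₁ z₂ d p - sc z₁ z₂ d q| ≤ 2 * Real.sqrt (2 * (5 * X ^ 27)) := by
      by_cases h0 : ∃ v ∈ S, sc z₁ z₂ d v ^ 2 ≤ 5 * X ^ 27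
      · obtain ⟨v, hv', hv2⟩ := h0
        intro p hp q hq
        have bp : |sc z₁ z₂ d p| ≤ Real.sqrt (2 * (5 * X ^ 27)) := by
          apply Real.abs_le_sqrt
          have h := hs2 p (hCS hp) v hv'
          rw [abs_le] at h
          linarith
        have bq : |sc z₁ z₂ d q| ≤ Real.sqrt (2 * (5 * X ^ 27)) := by
          apply Real.abs_le_sqrt
          have h := hs2 q (hCS hq) v hv'
          rw [abs_le] at h
          linarith
        calc |sc z₁ z₂ d p - sc z₁ z₂ d q| ≤ |sc z₁ z₂ d p| + |sc z₁ z₂ d q| := abs_sub _ _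
          _ ≤ 2 * Real.sqrt (2 * (5 * X ^ 27)) := by linarith
      · push_neg at h0
        have hUo : IsOpen ((sc z₁ z₂ d) ⁻¹' (Set.Ioi 0)) := isOpen_Ioi.preimage (cont_sc z₁ z₂ d)
        have hVo : IsOpen ((sc z₁ z₂ d) ⁻¹' (Set.Iio 0)) := isOpen_Iio.preimage (cont_sc z₁ z₂ d)
        have hdisj : Disjoint ((sc z₁ z₂ d) ⁻¹' (Set.Ioi 0)) ((sc z₁ z₂ d) ⁻¹' (Set.Iio 0)) := by
          rw [Set.disjoint_left]
          intro y hy hy'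
          simp only [Set.mem_preimage, Set.mem_Ioi, Set.mem_Iio] at hy hy'
          linarith
        have hcover : connectedComponentIn S x
            ⊆ ((sc z₁ z₂ d) ⁻¹' (Set.Ioi 0)) ∪ ((sc z₁ z₂ d) ⁻¹' (Set.Iio 0)) := by
          intro y hy
          have h := h0 y (hCS hy)
          rcases lt_trichotomy (sc z₁ z₂ d y) 0 with h' | h' | h'
          · exact Or.inr h'
          · exfalso; rw [h'] at h; simpa using lt_trans hL0 h
          · exact Or.inl h'
        have hsqrt : ∀ y ∈ connectedComponentIn S x,
            Real.sqrt (5 * X ^ 27) < |sc z₁ z₂ d y| := by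
          intro y hy
          have h := h0 y (hCS hy)
          have hne0 : sc z₁ z₂ d y ≠ 0 := by
            intro hz; rw [hz] at h; simpa using lt_trans hL0 h
          have habs : 0 < |sc z₁ z₂ d y| := abs_pos.2 hne0
          exact (Real.sqrt_lt' habs).2 (by rw [sq_abs]; exact h)
        rcases hCpre.subset_or_subset hUo hVo hdisj hcover with hsub | hsub
        · intro p hp q hq
          have hp' : 0 < sc z₁ z₂ d p := hsub hp
          have hq' : 0 < sc z₁ z₂ d q := hsub hq
          have hap : Real.sqrt (5 * X ^ 27) < sc z₁ z₂ d p := by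
            have := hsqrt p hp; rwa [abs_of_pos hp'] at this
          have haq : Real.sqrt (5 * X ^ 27) < sc z₁ z₂ d q := by
            have := hsqrt q hq; rwa [abs_of_pos hq'] at this
          exact realstep _ _ _ hL0 hap haq (hs2 p (hCS hp) q (hCS hq))
        · intro p hp q hq
          have hp' : sc z₁ z₂ d p < 0 := hsub hp
          have hq' : sc z₁ z₂ d q < 0 := hsub hq
          have hap : Real.sqrt (5 * X ^ 27) < -(sc z₁ z₂ d p) := by
            have := hsqrt p hp; rwa [abs_of_neg hp'] at this
          have haq : Real.sqrt (5 * X ^ 27) < -(sc z₁ z₂ d q) := by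
            have := hsqrt q hq; rwa [abs_of_neg hq'] at this
          have habs2 : |(-(sc z₁ z₂ d p)) ^ 2 - (-(sc z₁ z₂ d q)) ^ 2| ≤ 5 * X ^ 27 := by
            rw [neg_sq, neg_sq]; exact hs2 p (hCS hp) q (hCS hq)
          have hres := realstep _ _ _ hL0 hap haq habs2
          have heq : (-(sc z₁ z₂ d p)) - (-(sc z₁ z₂ d q)) = -(sc z₁ z₂ d p - sc z₁ z₂ d q) := by
            ring
          rwa [heq, abs_neg] at hres
    have hTY : 2 * X ^ 26 ≤ (2 : ℝ) ^ (-(13.5:ℝ) * (n : ℝ)) :=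
      TY_bound X _ hX0 hXle hY0 hY2
    have hdist : ∀ p ∈ connectedComponentIn S x, ∀ q ∈ connectedComponentIn S x,
        dist p q ≤ 7 * (2 : ℝ) ^ (-(13.5:ℝ) * (n : ℝ)) := by
      intro p hp q hq
      have g3 := G3 hdne hv p q
      refine dist_final (dist p q) (tc z₁ z₂ d p - tc z₁ z₂ d q)
        (sc z₁ z₂ d p - sc z₁ z₂ d q) _ (5 * X ^ 27) dist_nonneg hY0 g3 ?_
        (hsdiff p hp q hq) hL0.le ?_
      · exact le_trans (ht p (hCS hp) q (hCS hq)) hTY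
      · exact LY_bound X _ hX0 hY2
    refine lt_of_le_of_lt (Metric.diam_le_of_forall_dist_le (by positivity) hdist) ?_
    exact mul_lt_mul_of_pos_right (by norm_num) hY0
end

section
/- Let t > 1/2 and let μ be a compactly supported t-regular Radon measure on ℝ² (i.e. c·r^t ≤ μ(B(x,r)) ≤ C·r^t for all x ∈ supp(μ) and 0 < r < diam(supp μ)). Then for δ = 4 and every η > 0, lim_{r→0} μ({x ∈ ℝ² : μ(A(x,r,4)) ≥ η·μ(B(x,r))}) = 0; moreover the measure of this set is bounded by C'·η^{−1}·r^{t−1/2} for a constant C' depending on μ. -/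
open MeasureTheory Metric Set Filter

/-- The annulus `A(x,r,4) = B(x,r) \ B(x, r - r^4)` in the Euclidean plane. -/
noncomputable def ann4 (x : EuclideanSpace ℝ (Fin 2)) (r : ℝ) :
    Set (EuclideanSpace ℝ (Fin 2)) :=
  closedBall x r \ closedBall x (r - r ^ (4 : ℕ))

open scoped ENNReal

set_option maxHeartbeats 1000000

abbrev E2 := EuclideanSpace ℝ (Fin 2)



private lemma sq_le_of_abs_le' {x M : ℝ} (h1 : x ≤ M) (h2 : -M ≤ x) : x^2 ≤ M^2 := by
  nlinarith

private lemma mul_le_of_abs_le' {x y Mx My : ℝ} (hx1 : x ≤ Mx) (hx2 : -Mx ≤ x)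
    (hy1 : y ≤ My) (hy2 : -My ≤ y) : x * y ≤ Mx * My := by nlinarith

private lemma same_sign_sq_diff {Q Q' W : ℝ} (h1 : Q^2 - Q'^2 ≤ W) (h2 : Q'^2 - Q^2 ≤ W)
    (hs : 0 ≤ Q * Q') : (Q - Q')^2 ≤ W := by
  rcases le_total (Q^2) (Q'^2) with h | h
  · have hq : Q^2 ≤ Q*Q' := by nlinarith [sq_nonneg (Q - Q'), sq_nonneg (Q + Q')]
    nlinarith
  · have hq : Q'^2 ≤ Q*Q' := by nlinarith [sq_nonneg (Q - Q'), sq_nonneg (Q + Q')]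
    nlinarith

lemma core_geom {r w d2 a1 a2 b1 b2 c1 c2 : ℝ}
    (hw : 0 < w) (hwr : w ≤ r)
    (hd2 : d2 = c1^2 + c2^2) (hrw : r * w ≤ d2)
    (hA1 : (r - w)^2 ≤ a1^2 + a2^2) (hA2 : a1^2 + a2^2 ≤ r^2)
    (hA3 : (r - w)^2 ≤ (a1 - c1)^2 + (a2 - c2)^2)
    (hA4 : (a1 - c1)^2 + (a2 - c2)^2 ≤ r^2)
    (hB1 : (r - w)^2 ≤ b1^2 + b2^2) (hB2 : b1^2 + b2^2 ≤ r^2)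
    (hB3 : (r - w)^2 ≤ (b1 - c1)^2 + (b2 - c2)^2)
    (hB4 : (b1 - c1)^2 + (b2 - c2)^2 ≤ r^2)
    (hsign : 0 ≤ (a1*c2 - a2*c1) * (b1*c2 - b2*c1)) :
    (a1 - b1)^2 + (a2 - b2)^2 ≤ 16 * (r * w) := by
  have hr : 0 < r := lt_of_lt_of_le hw hwr
  have hrw0 : 0 < r * w := mul_pos hr hw
  have hd2pos : 0 < d2 := lt_of_lt_of_le hrw0 hrw
  set A : ℝ := a1^2 + a2^2 with hA
  set B : ℝ := b1^2 + b2^2 with hB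
  set P : ℝ := a1*c1 + a2*c2 with hP
  set P' : ℝ := b1*c1 + b2*c2 with hP'
  set Q : ℝ := a1*c2 - a2*c1 with hQ
  set Q' : ℝ := b1*c2 - b2*c1 with hQ'
  have idA : (a1 - c1)^2 + (a2 - c2)^2 = A - 2*P + d2 := by rw [hd2, hA]; ring
  have idB : (b1 - c1)^2 + (b2 - c2)^2 = B - 2*P' + d2 := by rw [hd2, hB]; ring
  have hAw : r^2 - (r-w)^2 ≤ 2*(r*w) := by
    have hsw : (0:ℝ) ≤ w^2 := sq_nonneg w
    have : r^2 - (r-w)^2 = 2*(r*w) - w^2 := by ring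
    linarith only [this, hsw]
  rw [idA] at hA3 hA4
  rw [idB] at hB3 hB4
  -- linear bounds
  have hPb1 : 2*P - d2 ≤ 2*(r*w) := by linarith only [hA2, hA3, hAw]
  have hPb2 : -(2*(r*w)) ≤ 2*P - d2 := by linarith only [hA1, hA4, hAw]
  have hP'b1 : 2*P' - d2 ≤ 2*(r*w) := by linarith only [hB2, hB3, hAw]
  have hP'b2 : -(2*(r*w)) ≤ 2*P' - d2 := by linarith only [hB1, hB4, hAw]
  have hABd : A - B ≤ 2*(r*w) := by linarith only [hA2, hB1, hAw]
  have hBAd : B - A ≤ 2*(r*w) := by linarith only [hB2, hA1, hAw]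
  have hPP'1 : P - P' ≤ 2*(r*w) := by linarith only [hPb1, hP'b2]
  have hPP'2 : -(2*(r*w)) ≤ P - P' := by linarith only [hPb2, hP'b1]
  have hrw2 : (r*w)^2 ≤ (r*w)*d2 := by
    have := mul_le_mul_of_nonneg_left hrw (le_of_lt hrw0)
    calc (r*w)^2 = (r*w)*(r*w) := by ring
    _ ≤ (r*w)*d2 := this
  have hPP' : (P - P')^2 ≤ 4 * ((r*w) * d2) := by
    have h1 : (P - P')^2 ≤ (2*(r*w))^2 := sq_le_of_abs_le' hPP'1 hPP'2
    have h2 : (2*(r*w))^2 = 4*(r*w)^2 := by ring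
    linarith only [h1, h2, hrw2]
  have hPs1 : P + P' - d2 ≤ 2*(r*w) := by linarith only [hPb1, hP'b1]
  have hPs2 : -(2*(r*w)) ≤ P + P' - d2 := by linarith only [hPb2, hP'b2]
  have hPd : (P - P') * d2 ≤ 2*(r*w)*d2 :=
    mul_le_mul_of_nonneg_right hPP'1 (le_of_lt hd2pos)
  have hPd' : (P' - P) * d2 ≤ 2*(r*w)*d2 :=
    mul_le_mul_of_nonneg_right (by linarith only [hPP'2] : P' - P ≤ 2*(r*w))
      (le_of_lt hd2pos)
  have hmul : (P - P') * (P + P' - d2) ≤ (2*(r*w)) * (2*(r*w)) :=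
    mul_le_of_abs_le' hPP'1 hPP'2 hPs1 hPs2
  have hmul' : (P' - P) * (P + P' - d2) ≤ (2*(r*w)) * (2*(r*w)) :=
    mul_le_of_abs_le' (by linarith only [hPP'2]) (by linarith only [hPP'1]) hPs1 hPs2
  have e1 : (2*(r*w))*(2*(r*w)) = 4*(r*w)^2 := by ring
  have idPsq : P^2 - P'^2 = (P - P')*(P + P' - d2) + (P - P')*d2 := by ring
  have idPsq' : P'^2 - P^2 = (P' - P)*(P + P' - d2) + (P' - P)*d2 := by ring
  have hPsq1 : P^2 - P'^2 ≤ 2*(r*w)*d2 + 4*((r*w)*d2) := by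
    linarith only [idPsq, hmul, hPd, e1, hrw2]
  have hPsq2 : P'^2 - P^2 ≤ 2*(r*w)*d2 + 4*((r*w)*d2) := by
    linarith only [idPsq', hmul', hPd', e1, hrw2]
  have hQsq : Q^2 = A * d2 - P^2 := by rw [hd2, hA, hP, hQ]; ring
  have hQ'sq : Q'^2 = B * d2 - P'^2 := by rw [hd2, hB, hP', hQ']; ring
  have hABd2 : (A - B) * d2 ≤ 2*(r*w)*d2 :=
    mul_le_mul_of_nonneg_right hABd (le_of_lt hd2pos)
  have hBAd2 : (B - A) * d2 ≤ 2*(r*w)*d2 :=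
    mul_le_mul_of_nonneg_right hBAd (le_of_lt hd2pos)
  have hQQdiff1 : Q^2 - Q'^2 ≤ 8 * ((r*w) * d2) := by
    have h : Q^2 - Q'^2 = (A - B)*d2 - (P^2 - P'^2) := by rw [hQsq, hQ'sq]; ring
    have hlow : -(2*(r*w)*d2 + 4*((r*w)*d2)) ≤ P^2 - P'^2 := by linarith only [hPsq2]
    linarith only [h, hABd2, hlow]
  have hQQdiff2 : Q'^2 - Q^2 ≤ 8 * ((r*w) * d2) := by
    have h : Q'^2 - Q^2 = (B - A)*d2 - (P'^2 - P^2) := by rw [hQsq, hQ'sq]; ring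
    have hlow : -(2*(r*w)*d2 + 4*((r*w)*d2)) ≤ P'^2 - P^2 := by linarith only [hPsq1]
    linarith only [h, hBAd2, hlow]
  have hQQ' : (Q - Q')^2 ≤ 8 * ((r*w) * d2) := same_sign_sq_diff hQQdiff1 hQQdiff2 hsign
  have key : ((a1-b1)^2 + (a2-b2)^2) * d2 = (P - P')^2 + (Q - Q')^2 := by
    rw [hd2, hP, hP', hQ, hQ']; ring
  have h12 : ((a1-b1)^2 + (a2-b2)^2) * d2 ≤ (12 * (r*w)) * d2 := by
    have e2 : (12 * (r*w)) * d2 = 4*((r*w)*d2) + 8*((r*w)*d2) := by ring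
    linarith only [key, hPP', hQQ', e2]
  have h16 : (a1-b1)^2 + (a2-b2)^2 ≤ 12 * (r*w) := le_of_mul_le_mul_right h12 hd2pos
  linarith only [h16, hrw0]


/-- squared distance in the Euclidean plane via coordinates -/
lemma dist_sq_eq (x y : E2) : dist x y ^ 2 = (x 0 - y 0)^2 + (x 1 - y 1)^2 := by
  rw [EuclideanSpace.dist_eq]
  rw [Real.sq_sqrt (by positivity)]
  simp [Fin.sum_univ_two, Real.dist_eq, sq_abs]

/-- the signed cross coordinate -/
def sigma2 (y z p : E2) : ℝ := (p 0 - y 0)*(z 1 - y 1) - (p 1 - y 1)*(z 0 - y 0)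

lemma mem_ann4_iff {x p : E2} {r : ℝ} :
    p ∈ ann4 x r ↔ dist p x ≤ r ∧ r - r ^ (4:ℕ) < dist p x := by
  simp [ann4, Set.mem_diff, Metric.mem_closedBall, not_le, and_comm]

/-- metric wrapper for the core geometric lemma -/
lemma dist_le_of_mem_annuli {r w : ℝ} (hw : 0 < w) (hwr : w ≤ r)
    {y z x x' : E2}
    (hd : Real.sqrt (r * w) ≤ dist y z)
    (hx1 : r - w ≤ dist x y) (hx2 : dist x y ≤ r)
    (hx3 : r - w ≤ dist x z) (hx4 : dist x z ≤ r)
    (h'1 : r - w ≤ dist x' y) (h'2 : dist x' y ≤ r)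
    (h'3 : r - w ≤ dist x' z) (h'4 : dist x' z ≤ r)
    (hsign : 0 ≤ sigma2 y z x * sigma2 y z x') :
    dist x x' ≤ 4 * Real.sqrt (r * w) := by
  have hrw0 : (0:ℝ) ≤ r * w := le_of_lt (mul_pos (lt_of_lt_of_le hw hwr) hw)
  have hsq : ∀ {u v : ℝ}, 0 ≤ u → u ≤ v → u^2 ≤ v^2 := fun hu huv => by nlinarith
  have hd2 : r * w ≤ dist y z ^ 2 := by
    have := hsq (Real.sqrt_nonneg (r*w)) hd
    rwa [Real.sq_sqrt hrw0] at this
  have hrw : 0 ≤ r - w := by linarith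
  have key := core_geom (r := r) (w := w)
    (d2 := dist y z ^ 2)
    (a1 := x 0 - y 0) (a2 := x 1 - y 1)
    (b1 := x' 0 - y 0) (b2 := x' 1 - y 1)
    (c1 := z 0 - y 0) (c2 := z 1 - y 1)
    hw hwr (by rw [dist_sq_eq y z]; ring_nf) hd2
  rw [← dist_sq_eq x y] at key
  have e1 : (x 0 - y 0 - (z 0 - y 0))^2 + (x 1 - y 1 - (z 1 - y 1))^2 = dist x z ^ 2 := by
    rw [dist_sq_eq x z]; ring
  have e2 : (x' 0 - y 0 - (z 0 - y 0))^2 + (x' 1 - y 1 - (z 1 - y 1))^2 = dist x' z ^ 2 := by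
    rw [dist_sq_eq x' z]; ring
  have e3 : (x 0 - y 0 - (x' 0 - y 0))^2 + (x 1 - y 1 - (x' 1 - y 1))^2 = dist x x' ^ 2 := by
    rw [dist_sq_eq x x']; ring
  rw [← dist_sq_eq x' y, e1, e2, e3] at key
  have hfin : dist x x' ^ 2 ≤ 16 * (r * w) :=
    key (hsq hrw hx1) (hsq dist_nonneg hx2) (hsq hrw hx3) (hsq dist_nonneg hx4)
      (hsq hrw h'1) (hsq dist_nonneg h'2) (hsq hrw h'3) (hsq dist_nonneg h'4) hsign
  have h16 : (4 * Real.sqrt (r * w))^2 = 16 * (r * w) := by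
    rw [mul_pow, Real.sq_sqrt hrw0]; ring
  nlinarith [dist_nonneg (x := x) (y := x'), Real.sqrt_nonneg (r * w)]

/-- measure of intersection of two annuli with centers at distance ≥ √(r·r⁴). -/
lemma measure_annuli_inter_le
    (μ : Measure E2) (K : Set E2) (hKsupp : μ Kᶜ = 0) (t C : ℝ) (hC : 0 < C)
    (hregU : ∀ x ∈ K, ∀ s : ℝ, 0 < s → s < Metric.diam K →
      μ (closedBall x s) ≤ ENNReal.ofReal (C * s ^ t))
    {r : ℝ} (hr : 0 < r) (hr1 : r ≤ 1) (y z : E2)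
    (hd : Real.sqrt (r * r ^ (4:ℕ)) ≤ dist y z)
    (hD : 4 * Real.sqrt (r * r ^ (4:ℕ)) < Metric.diam K) :
    μ (ann4 y r ∩ ann4 z r) ≤
      2 * ENNReal.ofReal (C * (4 * Real.sqrt (r * r ^ (4:ℕ))) ^ t) := by
  set w : ℝ := r ^ (4:ℕ) with hwdef
  have hw : 0 < w := by positivity
  have hwr : w ≤ r := by
    calc w = r^(4:ℕ) := rfl
    _ ≤ r^(1:ℕ) := pow_le_pow_of_le_one (le_of_lt hr) hr1 (by norm_num)
    _ = r := pow_one r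
  set β : ℝ := Real.sqrt (r * w) with hβdef
  have hβpos : 0 < β := Real.sqrt_pos.2 (mul_pos hr hw)
  set S : Set E2 := ann4 y r ∩ ann4 z r with hSdef
  have hmem : ∀ p ∈ S, (r - w ≤ dist p y ∧ dist p y ≤ r) ∧
      (r - w ≤ dist p z ∧ dist p z ≤ r) := by
    intro p hp
    obtain ⟨h1, h2⟩ := hp
    rw [mem_ann4_iff] at h1 h2
    exact ⟨⟨le_of_lt h1.2, h1.1⟩, ⟨le_of_lt h2.2, h2.1⟩⟩
  have key : ∀ T : Set E2, T ⊆ S → (∀ p ∈ T, ∀ q ∈ T, 0 ≤ sigma2 y z p * sigma2 y z q) →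
      μ T ≤ ENNReal.ofReal (C * (4 * β) ^ t) := by
    intro T hTS hTsign
    by_cases hne : (T ∩ K).Nonempty
    · obtain ⟨a, haT, haK⟩ := hne
      have hTsub : T ⊆ closedBall a (4 * β) := by
        intro p hp
        rw [Metric.mem_closedBall]
        obtain ⟨⟨p1, p2⟩, ⟨p3, p4⟩⟩ := hmem p (hTS hp)
        obtain ⟨⟨a1, a2⟩, ⟨a3, a4⟩⟩ := hmem a (hTS haT)
        exact dist_le_of_mem_annuli hw hwr hd p1 p2 p3 p4 a1 a2 a3 a4
          (hTsign p hp a haT)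
      calc μ T ≤ μ (closedBall a (4 * β)) := measure_mono hTsub
      _ ≤ ENNReal.ofReal (C * (4 * β) ^ t) :=
          hregU a haK (4 * β) (by positivity) hD
    · have : T ⊆ Kᶜ := by
        intro p hp
        by_contra hcon
        exact hne ⟨p, hp, not_not.1 hcon⟩
      calc μ T ≤ μ Kᶜ := measure_mono this
      _ = 0 := hKsupp
      _ ≤ _ := zero_le
  have hS : S ⊆ (S ∩ {p | 0 ≤ sigma2 y z p}) ∪ (S ∩ {p | sigma2 y z p ≤ 0}) := by
    intro p hp
    rcases le_total 0 (sigma2 y z p) with h | h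
    · exact Or.inl ⟨hp, h⟩
    · exact Or.inr ⟨hp, h⟩
  calc μ S ≤ μ ((S ∩ {p | 0 ≤ sigma2 y z p}) ∪ (S ∩ {p | sigma2 y z p ≤ 0})) :=
      measure_mono hS
  _ ≤ μ (S ∩ {p | 0 ≤ sigma2 y z p}) + μ (S ∩ {p | sigma2 y z p ≤ 0}) := measure_union_le _ _
  _ ≤ ENNReal.ofReal (C * (4 * β) ^ t) + ENNReal.ofReal (C * (4 * β) ^ t) := by
      gcongr
      · exact key _ (inter_subset_left) (fun p hp q hq => mul_nonneg hp.2 hq.2)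
      · exact key _ (inter_subset_left) (fun p hp q hq => mul_nonneg_of_nonpos_of_nonpos hp.2 hq.2)
  _ = 2 * ENNReal.ofReal (C * (4 * β) ^ t) := (two_mul _).symm

lemma annuli_inter_empty {r : ℝ} (hr : 0 < r) {y z : E2} (hd : 2 * r < dist y z) :
    ann4 y r ∩ ann4 z r = ∅ := by
  ext p
  simp only [Set.mem_inter_iff, mem_ann4_iff, Set.mem_empty_iff_false, iff_false]
  rintro ⟨⟨h1, _⟩, ⟨h2, _⟩⟩
  have := dist_triangle y p z
  rw [dist_comm p y] at h1
  linarith [h1, h2, this, dist_comm y p ▸ h1]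

lemma ann4_measurable (x : E2) (r : ℝ) : MeasurableSet (ann4 x r) :=
  measurableSet_closedBall.diff measurableSet_closedBall

lemma second_moment (μ : Measure E2) [IsFiniteMeasure μ] (r : ℝ) :
    Measurable (fun x : E2 => μ (ann4 x r)) ∧
    ∫⁻ x, μ (ann4 x r) * μ (ann4 x r) ∂μ
      = ∫⁻ y, ∫⁻ z, μ (ann4 y r ∩ ann4 z r) ∂μ ∂μ := by
  set U : Set (E2 × E2) :=
    {p | dist p.2 p.1 ≤ r ∧ r - r ^ (4:ℕ) < dist p.2 p.1} with hUdef
  have hcont : Continuous fun p : E2 × E2 => dist p.2 p.1 :=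
    continuous_snd.dist continuous_fst
  have hU : MeasurableSet U := by
    apply MeasurableSet.inter
    · exact (isClosed_le hcont continuous_const).measurableSet
    · exact (isOpen_lt continuous_const hcont).measurableSet
  set G : E2 × E2 → ℝ≥0∞ := U.indicator 1 with hGdef
  have hGmeas : Measurable G := measurable_const.indicator hU
  have hUann : ∀ x y : E2, (x, y) ∈ U ↔ x ∈ ann4 y r := by
    intro x y
    rw [mem_ann4_iff]
    simp [hUdef, dist_comm]
  have h1 : ∀ x : E2, μ (ann4 x r) = ∫⁻ y, G (x, y) ∂μ := by
    intro x
    have : (fun y => G (x, y)) = (ann4 x r).indicator 1 := by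
      funext y
      simp only [hGdef, Set.indicator_apply]
      have : (x, y) ∈ U ↔ y ∈ ann4 x r := by
        rw [mem_ann4_iff]; simp [hUdef, dist_comm]
      by_cases hy : y ∈ ann4 x r <;> simp [Set.indicator_apply, this, hy]
    rw [this, lintegral_indicator_one (ann4_measurable x r)]
  have hFmeas : Measurable (fun x : E2 => μ (ann4 x r)) := by
    have : (fun x : E2 => μ (ann4 x r)) = fun x => ∫⁻ y, G (x, y) ∂μ := funext h1
    rw [this]
    exact hGmeas.lintegral_prod_right'
  refine ⟨hFmeas, ?_⟩
  have hGxmeas : ∀ x : E2, Measurable (fun y => G (x, y)) := fun x =>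
    hGmeas.comp measurable_prodMk_left
  -- step 1 : product of integrals as integral over product
  have step1 : ∀ x : E2, μ (ann4 x r) * μ (ann4 x r)
      = ∫⁻ p : E2 × E2, G (x, p.1) * G (x, p.2) ∂(μ.prod μ) := by
    intro x
    rw [h1 x, lintegral_prod_mul (hGxmeas x).aemeasurable (hGxmeas x).aemeasurable]
  have hbig : Measurable fun q : E2 × (E2 × E2) => G (q.1, q.2.1) * G (q.1, q.2.2) := by
    apply Measurable.mul
    · exact hGmeas.comp (measurable_fst.prodMk (measurable_fst.comp measurable_snd))
    · exact hGmeas.comp (measurable_fst.prodMk (measurable_snd.comp measurable_snd))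
  have step2 : ∫⁻ x, ∫⁻ p : E2 × E2, G (x, p.1) * G (x, p.2) ∂(μ.prod μ) ∂μ
      = ∫⁻ p : E2 × E2, ∫⁻ x, G (x, p.1) * G (x, p.2) ∂μ ∂(μ.prod μ) :=
    lintegral_lintegral_swap hbig.aemeasurable
  have step3 : ∀ p : E2 × E2, ∫⁻ x, G (x, p.1) * G (x, p.2) ∂μ
      = μ (ann4 p.1 r ∩ ann4 p.2 r) := by
    intro p
    have heq : (fun x => G (x, p.1) * G (x, p.2))
        = (ann4 p.1 r ∩ ann4 p.2 r).indicator 1 := by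
      funext x
      simp only [hGdef, Set.indicator_apply]
      by_cases h1x : x ∈ ann4 p.1 r <;> by_cases h2x : x ∈ ann4 p.2 r <;>
        simp [hUann x p.1, hUann x p.2, h1x, h2x, Set.mem_inter_iff]
    rw [heq, lintegral_indicator_one ((ann4_measurable p.1 r).inter (ann4_measurable p.2 r))]
  have hTmeas : Measurable fun p : E2 × E2 => μ (ann4 p.1 r ∩ ann4 p.2 r) := by
    have : (fun p : E2 × E2 => μ (ann4 p.1 r ∩ ann4 p.2 r))
        = fun p => ∫⁻ x, G (x, p.1) * G (x, p.2) ∂μ := by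
      funext p; rw [step3 p]
    rw [this]
    exact Measurable.lintegral_prod_left' hbig
  calc ∫⁻ x, μ (ann4 x r) * μ (ann4 x r) ∂μ
      = ∫⁻ x, ∫⁻ p : E2 × E2, G (x, p.1) * G (x, p.2) ∂(μ.prod μ) ∂μ := by
        congr 1; funext x; exact step1 x
  _ = ∫⁻ p : E2 × E2, ∫⁻ x, G (x, p.1) * G (x, p.2) ∂μ ∂(μ.prod μ) := step2
  _ = ∫⁻ p : E2 × E2, μ (ann4 p.1 r ∩ ann4 p.2 r) ∂(μ.prod μ) := by
        congr 1; funext p; exact step3 p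
  _ = ∫⁻ y, ∫⁻ z, μ (ann4 y r ∩ ann4 z r) ∂μ ∂μ := lintegral_prod _ hTmeas.aemeasurable

/-- the main quantitative bound -/
lemma main_bound (μ : Measure E2) [IsFiniteMeasure μ]
    (t : ℝ) (ht : 1 / 2 < t)
    (K : Set E2) (hK : IsCompact K) (hKsupp : μ Kᶜ = 0)
    (c C : ℝ) (hc : 0 < c) (hC : 0 < C)
    (hreg : ∀ x ∈ K, ∀ r : ℝ, 0 < r → r < Metric.diam K →
      ENNReal.ofReal (c * r ^ t) ≤ μ (closedBall x r) ∧
      μ (closedBall x r) ≤ ENNReal.ofReal (C * r ^ t))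
    (η : ℝ) (hη : 0 < η) :
    ∃ C' > (0 : ℝ), ∀ r : ℝ, 0 < r → r < 1 →
      μ {x | ENNReal.ofReal η * μ (closedBall x r) ≤ μ (ann4 x r)} ≤
        ENNReal.ofReal (C' * η⁻¹ * r ^ (t - 1 / 2)) := by
  have ht' : (0:ℝ) < t - 1/2 := by linarith
  -- degenerate case: K has zero diameter
  by_cases hdiam : Metric.diam K ≤ 0
  · refine ⟨1, one_pos, fun r hr hr1 => ?_⟩
    have hzero : μ {x | ENNReal.ofReal η * μ (closedBall x r) ≤ μ (ann4 x r)} = 0 := by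
      by_cases hμ : μ univ = 0
      · exact le_antisymm (le_trans (measure_mono (subset_univ _)) (le_of_eq hμ)) (zero_le)
      · have hsub : {x | ENNReal.ofReal η * μ (closedBall x r) ≤ μ (ann4 x r)} ⊆ Kᶜ := by
          intro x hx
          by_contra hxK
          have hxK : x ∈ K := not_not.1 hxK
          -- all of K is within distance 0 of x
          have hKx : ∀ k ∈ K, dist k x = 0 := fun k hk =>
            le_antisymm (le_trans (dist_le_diam_of_mem hK.isBounded hk hxK) hdiam)
              dist_nonneg
          have hr4 : r ^ (4:ℕ) ≤ r := by
            calc r^(4:ℕ) ≤ r^(1:ℕ) :=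
              pow_le_pow_of_le_one (le_of_lt hr) (le_of_lt hr1) (by norm_num)
            _ = r := pow_one r
          -- ann4 x r misses K
          have hannK : ann4 x r ⊆ Kᶜ := by
            intro p hp
            intro hpK
            have h0 : dist p x = 0 := hKx p hpK
            have := (mem_ann4_iff.1 hp).2
            rw [h0] at this
            linarith
          have hann0 : μ (ann4 x r) = 0 :=
            le_antisymm (le_trans (measure_mono hannK) (le_of_eq hKsupp)) (zero_le)
          -- closed ball around x contains K
          have hKb : K ⊆ closedBall x r := fun k hk => by
            rw [Metric.mem_closedBall, hKx k hk]
            exact le_of_lt hr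
          have hcb : μ univ ≤ μ (closedBall x r) := by
            calc μ univ = μ (K ∪ Kᶜ) := by rw [union_compl_self]
            _ ≤ μ K + μ Kᶜ := measure_union_le _ _
            _ = μ K := by rw [hKsupp, add_zero]
            _ ≤ μ (closedBall x r) := measure_mono hKb
          have hx' := hx
          rw [mem_setOf_eq, hann0] at hx'
          have : ENNReal.ofReal η * μ (closedBall x r) = 0 := le_antisymm hx' (zero_le)
          rcases mul_eq_zero.1 this with h | h
          · exact absurd h (by simp [ENNReal.ofReal_eq_zero]; linarith)
          · exact hμ (le_antisymm (le_trans hcb (le_of_eq h)) (zero_le))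
        exact le_antisymm (le_trans (measure_mono hsub) (le_of_eq hKsupp)) (zero_le)
    rw [hzero]
    exact zero_le
  push_neg at hdiam
  -- main case
  set mU : ℝ := (μ univ).toReal with hmU
  have hmU0 : 0 ≤ mU := ENNReal.toReal_nonneg
  have h8t : (0:ℝ) < (8:ℝ) ^ t := Real.rpow_pos_of_pos (by norm_num) t
  set K0 : ℝ := C^2 * (1 + 2 * (8:ℝ)^t) with hK0
  have hK0pos : 0 < K0 := by positivity
  set r0 : ℝ := min 1 (Metric.diam K / 8) with hr0def
  have hr0pos : 0 < r0 := lt_min one_pos (by positivity)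
  set Cmain : ℝ := K0 * (mU + 1) / (c^2 * η) with hCmain
  have hCmainpos : 0 < Cmain := by positivity
  have hr0t : (0:ℝ) < r0 ^ (t - 1/2) := Real.rpow_pos_of_pos hr0pos _
  set Ctriv : ℝ := (mU + 1) * η / r0 ^ (t - 1/2) with hCtriv
  have hCtrivpos : 0 < Ctriv := by positivity
  refine ⟨max Cmain Ctriv, lt_of_lt_of_le hCmainpos (le_max_left _ _), fun r hr hr1 => ?_⟩
  have hrt_pos : (0:ℝ) < r ^ (t - 1/2) := Real.rpow_pos_of_pos hr _
  have hmax : ∀ a : ℝ, a ≤ max Cmain Ctriv →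
      ENNReal.ofReal (a * η⁻¹ * r ^ (t - 1/2)) ≤
      ENNReal.ofReal (max Cmain Ctriv * η⁻¹ * r ^ (t - 1/2)) := by
    intro a ha
    apply ENNReal.ofReal_le_ofReal
    have : (0:ℝ) ≤ η⁻¹ * r ^ (t-1/2) := by positivity
    calc a * η⁻¹ * r ^ (t-1/2) = a * (η⁻¹ * r ^ (t-1/2)) := by ring
    _ ≤ max Cmain Ctriv * (η⁻¹ * r ^ (t-1/2)) := mul_le_mul_of_nonneg_right ha this
    _ = max Cmain Ctriv * η⁻¹ * r ^ (t-1/2) := by ring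
  rcases lt_or_ge r r0 with hcase | hcase
  · -- main estimate
    have hrle1 : r ≤ 1 := le_of_lt hr1
    have hrd8 : r < Metric.diam K / 8 := lt_of_lt_of_le hcase (min_le_right _ _)
    have hrdiam : r < Metric.diam K := by linarith
    have h2rdiam : 2 * r < Metric.diam K := by linarith
    set w : ℝ := r ^ (4:ℕ) with hwdef
    have hw : 0 < w := by positivity
    have hw_le : w ≤ r := by
      calc w = r^(4:ℕ) := rfl
      _ ≤ r^(1:ℕ) := pow_le_pow_of_le_one (le_of_lt hr) hrle1 (by norm_num)
      _ = r := pow_one r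
    set β : ℝ := Real.sqrt (r * w) with hβdef
    have hβpos : 0 < β := Real.sqrt_pos.2 (mul_pos hr hw)
    have hβ_le_r : β ≤ r := by
      rw [hβdef]
      calc Real.sqrt (r * w) ≤ Real.sqrt (r * r) :=
        Real.sqrt_le_sqrt (mul_le_mul_of_nonneg_left hw_le (le_of_lt hr))
      _ = r := Real.sqrt_mul_self (le_of_lt hr)
    have hβdiam : β < Metric.diam K := lt_of_le_of_lt hβ_le_r hrdiam
    have h4βdiam : 4 * β < Metric.diam K := by
      have : 4 * β ≤ 4 * r := by linarith
      linarith
    obtain ⟨hFmeas, hmom⟩ := second_moment μ r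
    set e : ℝ≥0∞ := ENNReal.ofReal (η * (c * r^t)) with he
    have hε0 : (0:ℝ) < η * (c * r^t) := by
      have : (0:ℝ) < r ^ t := Real.rpow_pos_of_pos hr t
      positivity
    have he0 : e ≠ 0 := ne_of_gt (ENNReal.ofReal_pos.2 hε0)
    have hetop : e ≠ ⊤ := ENNReal.ofReal_ne_top
    have hsubset : {x | ENNReal.ofReal η * μ (closedBall x r) ≤ μ (ann4 x r)} ⊆
        {x | e * e ≤ μ (ann4 x r) * μ (ann4 x r)} ∪ Kᶜ := by
      intro x hx
      by_cases hxK : x ∈ K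
      · left
        have hlow := (hreg x hxK r hr hrdiam).1
        have hle : e ≤ μ (ann4 x r) := by
          calc e = ENNReal.ofReal η * ENNReal.ofReal (c * r^t) := by
                rw [he, ENNReal.ofReal_mul (le_of_lt hη)]
          _ ≤ ENNReal.ofReal η * μ (closedBall x r) := mul_le_mul_right hlow _
          _ ≤ μ (ann4 x r) := hx
        exact mul_le_mul' hle hle
      · exact Or.inr hxK
    have hmarkov : μ {x | e * e ≤ μ (ann4 x r) * μ (ann4 x r)} ≤
        (∫⁻ x, μ (ann4 x r) * μ (ann4 x r) ∂μ) / (e * e) :=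
      meas_ge_le_lintegral_div (hFmeas.mul hFmeas).aemeasurable
        (mul_ne_zero he0 he0) (ENNReal.mul_ne_top hetop hetop)
    have hings : ∀ᵐ y ∂μ, y ∈ K := by
      rw [ae_iff]
      exact hKsupp
    set c1 : ℝ≥0∞ := ENNReal.ofReal (C * r^t) with hc1
    set c2 : ℝ≥0∞ := 2 * ENNReal.ofReal (C * (4*β)^t) with hc2
    set B1 : ℝ := C * r^t * (C * β^t) + (2 * ((C * (4*β)^t) * (C * (2*r)^t))) with hB1
    have hrt0 : (0:ℝ) < r ^ t := Real.rpow_pos_of_pos hr t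
    have hβt0 : (0:ℝ) < β ^ t := Real.rpow_pos_of_pos hβpos t
    have h4βt0 : (0:ℝ) < (4*β) ^ t := Real.rpow_pos_of_pos (by linarith) t
    have h2rt0 : (0:ℝ) < (2*r) ^ t := Real.rpow_pos_of_pos (by linarith) t
    have hzbound2 : ∀ y ∈ K, ∫⁻ z, μ (ann4 y r ∩ ann4 z r) ∂μ ≤ ENNReal.ofReal B1 := by
      intro y hy
      have hpt : ∀ z, μ (ann4 y r ∩ ann4 z r) ≤
          c1 * (closedBall y β).indicator 1 z + c2 * (closedBall y (2*r)).indicator 1 z := by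
        intro z
        rcases le_or_gt (dist z y) β with h | h
        · have hind : (closedBall y β).indicator (1 : E2 → ℝ≥0∞) z = 1 :=
            Set.indicator_of_mem (Metric.mem_closedBall.2 h) 1
          have hth : μ (ann4 y r ∩ ann4 z r) ≤ c1 := by
            calc μ (ann4 y r ∩ ann4 z r) ≤ μ (ann4 y r) := measure_mono inter_subset_left
            _ ≤ μ (closedBall y r) := measure_mono diff_subset
            _ ≤ c1 := (hreg y hy r hr hrdiam).2
          calc μ (ann4 y r ∩ ann4 z r) ≤ c1 := hth
          _ = c1 * (closedBall y β).indicator 1 z := by rw [hind, mul_one]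
          _ ≤ _ := le_self_add
        · rcases le_or_gt (dist z y) (2*r) with h2 | h2
          · have hind : (closedBall y (2*r)).indicator (1:E2→ℝ≥0∞) z = 1 :=
              Set.indicator_of_mem (Metric.mem_closedBall.2 h2) 1
            have hdyz : Real.sqrt (r * r^(4:ℕ)) ≤ dist y z := by
              rw [dist_comm]
              exact le_of_lt h
            have hth := measure_annuli_inter_le μ K hKsupp t C hC
              (fun x hx s hs hsd => (hreg x hx s hs hsd).2) hr hrle1 y z hdyz
              (by rw [← hwdef, ← hβdef]; exact h4βdiam)
            rw [← hwdef, ← hβdef] at hth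
            calc μ (ann4 y r ∩ ann4 z r) ≤ c2 := hth
            _ = c2 * (closedBall y (2*r)).indicator 1 z := by rw [hind, mul_one]
            _ ≤ _ := le_add_self
          · have hdyz : 2 * r < dist y z := by rw [dist_comm]; exact h2
            rw [annuli_inter_empty hr hdyz, measure_empty]
            exact zero_le
      have hmeas1 : Measurable ((closedBall y β).indicator (1:E2→ℝ≥0∞)) :=
        measurable_const.indicator measurableSet_closedBall
      have hmeas2 : Measurable ((closedBall y (2*r)).indicator (1:E2→ℝ≥0∞)) :=
        measurable_const.indicator measurableSet_closedBall
      calc ∫⁻ z, μ (ann4 y r ∩ ann4 z r) ∂μ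
          ≤ ∫⁻ z, (c1 * (closedBall y β).indicator 1 z
              + c2 * (closedBall y (2*r)).indicator 1 z) ∂μ := lintegral_mono hpt
      _ = c1 * μ (closedBall y β) + c2 * μ (closedBall y (2*r)) := by
          rw [lintegral_add_left (hmeas1.const_mul _), lintegral_const_mul _ hmeas1,
            lintegral_const_mul _ hmeas2, lintegral_indicator_one measurableSet_closedBall,
            lintegral_indicator_one measurableSet_closedBall]
      _ ≤ c1 * ENNReal.ofReal (C * β^t) + c2 * ENNReal.ofReal (C * (2*r)^t) := by
          gcongr
          · exact (hreg y hy β hβpos hβdiam).2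
          · exact (hreg y hy (2*r) (by linarith) h2rdiam).2
      _ = ENNReal.ofReal B1 := by
          rw [hB1, hc1, hc2, ENNReal.ofReal_add (by positivity) (by positivity),
            ← ENNReal.ofReal_mul (by positivity : (0:ℝ) ≤ C * r^t)]
          congr 1
          rw [ENNReal.ofReal_mul (by norm_num : (0:ℝ) ≤ 2),
            ENNReal.ofReal_mul (by positivity : (0:ℝ) ≤ C * (4*β)^t),
            ENNReal.ofReal_ofNat, mul_assoc]
    have hdouble : ∫⁻ y, ∫⁻ z, μ (ann4 y r ∩ ann4 z r) ∂μ ∂μ ≤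
        ENNReal.ofReal B1 * μ univ := by
      calc ∫⁻ y, ∫⁻ z, μ (ann4 y r ∩ ann4 z r) ∂μ ∂μ
          ≤ ∫⁻ _, ENNReal.ofReal B1 ∂μ :=
            lintegral_mono_ae (hings.mono fun y hy => hzbound2 y hy)
      _ = ENNReal.ofReal B1 * μ univ := lintegral_const _
    have hfinal1 : μ {x | ENNReal.ofReal η * μ (closedBall x r) ≤ μ (ann4 x r)} ≤
        (ENNReal.ofReal B1 * μ univ) / (e * e) := by
      calc μ {x | ENNReal.ofReal η * μ (closedBall x r) ≤ μ (ann4 x r)}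
          ≤ μ ({x | e * e ≤ μ (ann4 x r) * μ (ann4 x r)} ∪ Kᶜ) := measure_mono hsubset
      _ ≤ μ {x | e * e ≤ μ (ann4 x r) * μ (ann4 x r)} + μ Kᶜ := measure_union_le _ _
      _ = μ {x | e * e ≤ μ (ann4 x r) * μ (ann4 x r)} := by rw [hKsupp, add_zero]
      _ ≤ (∫⁻ x, μ (ann4 x r) * μ (ann4 x r) ∂μ) / (e * e) := hmarkov
      _ = (∫⁻ y, ∫⁻ z, μ (ann4 y r ∩ ann4 z r) ∂μ ∂μ) / (e * e) := by rw [hmom]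
      _ ≤ (ENNReal.ofReal B1 * μ univ) / (e * e) := ENNReal.div_le_div_right hdouble _
    -- numerical work
    have hμu : μ univ = ENNReal.ofReal mU := (ENNReal.ofReal_toReal (measure_ne_top _ _)).symm
    have hee : e * e = ENNReal.ofReal ((η * (c * r^t))^2) := by
      rw [he, ← ENNReal.ofReal_mul (le_of_lt hε0)]
      congr 1
      ring
    have hB1nonneg : 0 ≤ B1 := by positivity
    -- rpow algebra : β = r^(5/2)
    have hβrpow : β = r ^ ((5:ℝ)/2) := by
      rw [hβdef, hwdef]
      have h5 : r * r^(4:ℕ) = r^(5:ℕ) := by ring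
      rw [h5, Real.sqrt_eq_rpow, ← Real.rpow_natCast r 5, ← Real.rpow_mul (le_of_lt hr)]
      norm_num
    have hβt_pow : β ^ t = r ^ ((5:ℝ)/2 * t) := by
      rw [hβrpow, ← Real.rpow_mul (le_of_lt hr)]
    have h8 : (4:ℝ)^t * (2:ℝ)^t = (8:ℝ)^t := by
      rw [← Real.mul_rpow (by norm_num) (by norm_num)]
      norm_num
    have hB1eq : B1 = K0 * (r^t * β^t) := by
      rw [hB1, hK0, Real.mul_rpow (by norm_num : (0:ℝ) ≤ 4) (le_of_lt hβpos),
        Real.mul_rpow (by norm_num : (0:ℝ) ≤ 2) (le_of_lt hr)]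
      linear_combination (2*C^2*(r^t)*(β^t)) * h8
    have hprod : r^t * β^t = r ^ (t + (5:ℝ)/2 * t) := by
      rw [hβt_pow, Real.rpow_add hr]
    have hrr : r^(t-1/2) * (r^t * r^t) = r^(t - 1/2 + (t + t)) := by
      rw [Real.rpow_add hr, Real.rpow_add hr]
    have hexp : r ^ (t + (5:ℝ)/2 * t) ≤ r ^ (t - 1/2 + (t + t)) :=
      Real.rpow_le_rpow_of_exponent_ge hr hrle1 (by linarith)
    have hRHSeq : Cmain * η⁻¹ * r^(t-1/2) * (η * (c * r^t))^2
        = K0 * (mU + 1) * (r^(t-1/2) * (r^t * r^t)) := by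
      rw [hCmain]
      field_simp
    have hLHSle : B1 * mU ≤ Cmain * η⁻¹ * r^(t-1/2) * (η * (c * r^t))^2 := by
      rw [hRHSeq, hrr, hB1eq, hprod]
      have hpos2 : (0:ℝ) < r ^ (t - 1/2 + (t + t)) := Real.rpow_pos_of_pos hr _
      calc K0 * r ^ (t + (5:ℝ)/2 * t) * mU
          ≤ K0 * r ^ (t - 1/2 + (t + t)) * mU := by
            apply mul_le_mul_of_nonneg_right _ hmU0
            exact mul_le_mul_of_nonneg_left hexp (le_of_lt hK0pos)
      _ ≤ K0 * (mU + 1) * r ^ (t - 1/2 + (t + t)) := by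
            have h2 : K0 * r ^ (t - 1/2 + (t + t)) * mU
                ≤ K0 * r ^ (t - 1/2 + (t + t)) * (mU + 1) :=
              mul_le_mul_of_nonneg_left (by linarith only) (by positivity)
            have h3 : K0 * r ^ (t - 1/2 + (t + t)) * (mU + 1)
                = K0 * (mU + 1) * r ^ (t - 1/2 + (t + t)) := by ring
            linarith only [h2, h3]
    have hreal : (B1 * mU) / ((η * (c * r^t))^2) ≤ Cmain * η⁻¹ * r ^ (t - 1/2) := by
      rw [div_le_iff₀ (by positivity)]
      exact hLHSle
    calc μ {x | ENNReal.ofReal η * μ (closedBall x r) ≤ μ (ann4 x r)}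
        ≤ (ENNReal.ofReal B1 * μ univ) / (e * e) := hfinal1
    _ = ENNReal.ofReal (B1 * mU) / ENNReal.ofReal ((η * (c * r^t))^2) := by
        rw [hμu, ← ENNReal.ofReal_mul hB1nonneg, hee]
    _ = ENNReal.ofReal ((B1 * mU) / ((η * (c * r^t))^2)) :=
        (ENNReal.ofReal_div_of_pos (by positivity)).symm
    _ ≤ ENNReal.ofReal (Cmain * η⁻¹ * r ^ (t - 1/2)) := ENNReal.ofReal_le_ofReal hreal
    _ ≤ ENNReal.ofReal (max Cmain Ctriv * η⁻¹ * r ^ (t - 1/2)) :=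
        hmax Cmain (le_max_left _ _)
  · -- trivial estimate for r0 ≤ r < 1
    have h1 : μ {x | ENNReal.ofReal η * μ (closedBall x r) ≤ μ (ann4 x r)} ≤ μ univ :=
      measure_mono (subset_univ _)
    have h2 : μ univ = ENNReal.ofReal mU := (ENNReal.ofReal_toReal (measure_ne_top _ _)).symm
    have hrr0 : r0 ^ (t-1/2) ≤ r ^ (t-1/2) :=
      Real.rpow_le_rpow (le_of_lt hr0pos) hcase (le_of_lt ht')
    have h3 : mU ≤ Ctriv * η⁻¹ * r ^ (t-1/2) := by
      have hq : Ctriv * η⁻¹ * r ^ (t-1/2) = (mU+1) * (r^(t-1/2) / r0^(t-1/2)) := by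
        rw [hCtriv]
        field_simp
      have hge1 : (1:ℝ) ≤ r^(t-1/2)/r0^(t-1/2) := (one_le_div hr0t).2 hrr0
      have h4 : (mU+1) * 1 ≤ (mU+1) * (r^(t-1/2)/r0^(t-1/2)) :=
        mul_le_mul_of_nonneg_left hge1 (by positivity)
      linarith only [hq, h4]
    calc μ {x | ENNReal.ofReal η * μ (closedBall x r) ≤ μ (ann4 x r)} ≤ μ univ := h1
    _ = ENNReal.ofReal mU := h2
    _ ≤ ENNReal.ofReal (Ctriv * η⁻¹ * r ^ (t-1/2)) := ENNReal.ofReal_le_ofReal h3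
    _ ≤ ENNReal.ofReal (max Cmain Ctriv * η⁻¹ * r ^ (t - 1/2)) :=
        hmax Ctriv (le_max_right _ _)

/-- For a compactly supported `t`-regular measure on the plane with `t > 1/2`,
the measure of the set of points where `P_μ(x,r,4,η)` holds tends to `0` as
`r → 0⁺`; quantitatively it is bounded by `C'·η⁻¹·r^{t-1/2}`. -/
theorem stmt11 (μ : Measure (EuclideanSpace ℝ (Fin 2))) [IsFiniteMeasure μ]
    (t : ℝ) (ht : 1 / 2 < t)
    (K : Set (EuclideanSpace ℝ (Fin 2))) (hK : IsCompact K) (hKsupp : μ Kᶜ = 0)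
    (c C : ℝ) (hc : 0 < c) (hC : 0 < C)
    (hreg : ∀ x ∈ K, ∀ r : ℝ, 0 < r → r < Metric.diam K →
      ENNReal.ofReal (c * r ^ t) ≤ μ (closedBall x r) ∧
      μ (closedBall x r) ≤ ENNReal.ofReal (C * r ^ t))
    (η : ℝ) (hη : 0 < η) :
    Tendsto
      (fun r : ℝ =>
        μ {x | ENNReal.ofReal η * μ (closedBall x r) ≤ μ (ann4 x r)})
      (nhdsWithin 0 (Set.Ioi 0)) (nhds 0) ∧
    ∃ C' > (0 : ℝ), ∀ r : ℝ, 0 < r → r < 1 →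
      μ {x | ENNReal.ofReal η * μ (closedBall x r) ≤ μ (ann4 x r)} ≤
        ENNReal.ofReal (C' * η⁻¹ * r ^ (t - 1 / 2)) := by
  obtain ⟨C', hC'pos, hbound⟩ := main_bound μ t ht K hK hKsupp c C hc hC hreg η hη
  constructor
  · have ht' : (0:ℝ) < t - 1/2 := by linarith
    have hg : Tendsto (fun r : ℝ => ENNReal.ofReal (C' * η⁻¹ * r ^ (t - 1/2)))
        (nhdsWithin 0 (Set.Ioi 0)) (nhds 0) := by
      have h1 : Tendsto (fun r : ℝ => r ^ (t - 1/2)) (nhds 0) (nhds 0) := by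
        have hcont := (Real.continuousAt_rpow_const 0 (t - 1/2)
          (Or.inr (le_of_lt ht'))).tendsto
        convert hcont using 2
        exact (Real.zero_rpow (ne_of_gt ht')).symm
      have h2 : Tendsto (fun r : ℝ => C' * η⁻¹ * r ^ (t - 1/2)) (nhds 0) (nhds 0) := by
        have := h1.const_mul (C' * η⁻¹)
        simpa using this
      have h3 : Tendsto (fun r : ℝ => ENNReal.ofReal (C' * η⁻¹ * r ^ (t - 1/2)))
          (nhds 0) (nhds 0) := by
        have := (ENNReal.continuous_ofReal.tendsto 0).comp h2
        rw [ENNReal.ofReal_zero] at this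
        exact this
      exact h3.mono_left nhdsWithin_le_nhds
    apply tendsto_of_tendsto_of_tendsto_of_le_of_le' tendsto_const_nhds hg
    · exact Filter.Eventually.of_forall (fun r => zero_le)
    · have hmem : Set.Ioo (0:ℝ) 1 ∈ nhdsWithin 0 (Set.Ioi 0) :=
        Ioo_mem_nhdsGT_of_mem (by constructor <;> norm_num)
      filter_upwards [hmem] with r hr
      exact hbound r hr.1 hr.2
  · exact ⟨C', hC'pos, hbound⟩
end
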